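/- arXiv:1612.07408 — 9 statements merged into one kernel-verified Lean document; each statement's English description precedes it below -/
import Mathlib

section
/- Let T be a countable set, let τ and m be probability mass functions on T, and let a be a probability mass function on T with a(t) > 0 for all t such that the generalized chi-squared distance χ²_a(τ,m) = Σ_t (τ(t) − m(t))²/a(t) is finite. Then χ²_a(τ,m) equals the supremum, over all real-valued functions h on T that are square-summable with respect to a and have Var_a(h) > 0, of the ratio (E_τ[h] − E_m[h])² / Var_a(h), where E_p[h] = Σ_t h(t)p(t) and Var_a(h) = Σ_t h(t)²a(t) − (Σ_t h(t)a(t))². -/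
/-!
The inequality `(E_τ h - E_m h)² ≤ χ²_a(τ,m) · Var_a h` is the weighted Cauchy–Schwarz inequality
for `h - E_a h` and `τ - m`; the centring constant drops out because `τ` and `m` have equal mass.
Conversely, for a finite `s ⊆ T` the test function equal to `(τ - m)/a` on `s` and to `0` off `s`
has ratio `C²/(C - D²) ≥ C`, where `C = Σ_{t∈s} (τ t - m t)²/a t` and `D = Σ_{t∈s} (τ t - m t)`.
Here `D² < C`: either `s = T` and `D = 0`, or `D² ≤ C · a(s)` by Cauchy–Schwarz with `a(s) < 1`.
Hence the supremum dominates every partial sum of `χ²_a(τ,m)`.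
-/

section RealSeries

variable {ι : Type*} {r f g w h : ι → ℝ}

lemma Summable.of_tsum_ne_zero (h : ∑' i, r i ≠ 0) : Summable r :=
  by_contra fun hr => h (tsum_eq_zero_of_not_summable hr)

lemma hasSum_of_tsum_eq_of_ne_zero {x : ℝ} (h : ∑' i, r i = x) (hx : x ≠ 0) : HasSum r x :=
  h ▸ (Summable.of_tsum_ne_zero (h ▸ hx)).hasSum

lemma Summable.of_sq_le_mul (hf : ∀ i, 0 ≤ f i) (hg : ∀ i, 0 ≤ g i)
    (hrfg : ∀ i, r i ^ 2 ≤ f i * g i) (hfs : Summable f) (hgs : Summable g) : Summable r := by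
  refine ((hfs.add hgs).div_const 2).of_norm_bounded fun i => abs_le_of_sq_le_sq ?_ ?_
  · nlinarith [hrfg i, sq_nonneg (f i - g i)]
  · linarith [hf i, hg i]

lemma tsum_sq_le_tsum_mul_tsum_of_sq_le_mul (hf : ∀ i, 0 ≤ f i) (hg : ∀ i, 0 ≤ g i)
    (hrfg : ∀ i, r i ^ 2 ≤ f i * g i) (hfs : Summable f) (hgs : Summable g) :
    (∑' i, r i) ^ 2 ≤ (∑' i, f i) * ∑' i, g i := by
  refine le_of_tendsto ((Summable.of_sq_le_mul hf hg hrfg hfs hgs).hasSum.pow 2)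
    (Filter.Eventually.of_forall fun s => ?_)
  calc (∑ i ∈ s, r i) ^ 2 ≤ (∑ i ∈ s, f i) * ∑ i ∈ s, g i :=
        Finset.sum_sq_le_sum_mul_sum_of_sq_le_mul s (fun i _ => hf i) (fun i _ => hg i)
          fun i _ => hrfg i
    _ ≤ (∑' i, f i) * ∑' i, g i :=
        mul_le_mul (hfs.sum_le_tsum s fun i _ => hf i) (hgs.sum_le_tsum s fun i _ => hg i)
          (Finset.sum_nonneg fun i _ => hg i) (tsum_nonneg hf)

lemma sq_tsum_mul_le_tsum_sq_mul_mul_tsum_sq_div {x y w : ι → ℝ} (hw : ∀ i, 0 < w i)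
    (hx : Summable fun i => x i ^ 2 * w i) (hy : Summable fun i => y i ^ 2 / w i) :
    (∑' i, x i * y i) ^ 2 ≤ (∑' i, x i ^ 2 * w i) * ∑' i, y i ^ 2 / w i :=
  tsum_sq_le_tsum_mul_tsum_of_sq_le_mul (fun i => by have := hw i; positivity)
    (fun i => by have := hw i; positivity) (fun i => le_of_eq <| by field_simp [(hw i).ne'])
    hx hy

lemma Summable.mul_of_sq_mul (hh : Summable fun i => h i ^ 2 * w i) (hw : ∀ i, 0 ≤ w i)
    (hws : Summable w) : Summable fun i => h i * w i :=
  .of_sq_le_mul (fun i => mul_nonneg (sq_nonneg _) (hw i)) hw (fun i => le_of_eq (by ring)) hh hws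

lemma hasSum_sub_tsum_sq_mul (hh : Summable fun i => h i ^ 2 * w i) (hw : ∀ i, 0 ≤ w i)
    (hw1 : HasSum w 1) :
    HasSum (fun i => (h i - ∑' j, h j * w j) ^ 2 * w i)
      ((∑' i, h i ^ 2 * w i) - (∑' i, h i * w i) ^ 2) := by
  set c := ∑' j, h j * w j
  have := (hh.hasSum.sub ((hh.mul_of_sq_mul hw hw1.summable).hasSum.mul_left (2 * c))).add
    (hw1.mul_left (c ^ 2))
  rw [show (∑' i, h i ^ 2 * w i) - c ^ 2 = (∑' i, h i ^ 2 * w i) - 2 * c * c + c ^ 2 * 1 by ring]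
  exact this.congr_fun fun i => by ring

end RealSeries

section ChiSquared

variable {T : Type*} {τ m a : T → ℝ}

def standardizedMeanDifferences (τ m a : T → ℝ) : Set ℝ :=
  { r : ℝ | ∃ h : T → ℝ,
        Summable (fun t => (h t) ^ 2 * a t) ∧
        Summable (fun t => h t * τ t) ∧
        Summable (fun t => h t * m t) ∧
        0 < (∑' t, (h t) ^ 2 * a t) - (∑' t, h t * a t) ^ 2 ∧
        r = ((∑' t, h t * τ t) - (∑' t, h t * m t)) ^ 2 /
            ((∑' t, (h t) ^ 2 * a t) - (∑' t, h t * a t) ^ 2) }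

lemma sq_tsum_mul_sub_le_chiSq_mul_variance {h : T → ℝ} (ha0 : ∀ t, 0 < a t) (ha1 : HasSum a 1)
    (hτ1 : HasSum τ 1) (hm1 : HasSum m 1)
    (hchi : Summable fun t => (τ t - m t) ^ 2 / a t) (hh2 : Summable fun t => h t ^ 2 * a t)
    (hhτ : Summable fun t => h t * τ t) (hhm : Summable fun t => h t * m t) :
    ((∑' t, h t * τ t) - ∑' t, h t * m t) ^ 2 ≤
      (∑' t, (τ t - m t) ^ 2 / a t) * ((∑' t, h t ^ 2 * a t) - (∑' t, h t * a t) ^ 2) := by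
  set c := ∑' t, h t * a t
  have hvar := hasSum_sub_tsum_sq_mul hh2 (fun t => (ha0 t).le) ha1
  have hcov : HasSum (fun t => (h t - c) * (τ t - m t)) ((∑' t, h t * τ t) - ∑' t, h t * m t) := by
    have := (hhτ.hasSum.sub hhm.hasSum).sub ((hτ1.sub hm1).mul_left c)
    rw [sub_self, mul_zero, sub_zero] at this
    exact this.congr_fun fun t => by ring
  rw [← hcov.tsum_eq, ← hvar.tsum_eq, mul_comm]
  exact sq_tsum_mul_le_tsum_sq_mul_mul_tsum_sq_div ha0 hvar.summable hchi

lemma sq_sum_sub_lt_sum_sq_div (ha0 : ∀ t, 0 < a t) (ha1 : HasSum a 1) (hτ1 : HasSum τ 1)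
    (hm1 : HasSum m 1) {s : Finset T} (hC : 0 < ∑ t ∈ s, (τ t - m t) ^ 2 / a t) :
    (∑ t ∈ s, (τ t - m t)) ^ 2 < ∑ t ∈ s, (τ t - m t) ^ 2 / a t := by
  by_cases hs : ∀ t, t ∈ s
  · have hsum {p : T → ℝ} (hp : HasSum p 1) : ∑ t ∈ s, p t = 1 :=
      (hasSum_sum_of_ne_finset_zero fun t ht => absurd (hs t) ht).unique hp
    rwa [Finset.sum_sub_distrib, hsum hτ1, hsum hm1, sub_self, zero_pow two_ne_zero]
  · push Not at hs
    obtain ⟨t₀, ht₀⟩ := hs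
    have hmass : ∑ t ∈ s, a t < 1 := by
      have := sum_le_hasSum (s.cons t₀ ht₀) (fun t _ => (ha0 t).le) ha1
      rw [Finset.sum_cons] at this
      linarith [ha0 t₀]
    have hCS := Finset.sum_sq_le_sum_mul_sum_of_sq_le_mul s
      (fun t _ => div_nonneg (sq_nonneg (τ t - m t)) (ha0 t).le) (fun t _ => (ha0 t).le)
      fun t _ => (div_mul_cancel₀ _ (ha0 t).ne').ge
    nlinarith

lemma exists_mem_standardizedMeanDifferences_ge (ha0 : ∀ t, 0 < a t) (ha1 : HasSum a 1)
    (hτ1 : HasSum τ 1) (hm1 : HasSum m 1) {s : Finset T}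
    (hC : 0 < ∑ t ∈ s, (τ t - m t) ^ 2 / a t) :
    ∃ r ∈ standardizedMeanDifferences τ m a, ∑ t ∈ s, (τ t - m t) ^ 2 / a t ≤ r := by
  set C := ∑ t ∈ s, (τ t - m t) ^ 2 / a t
  set D := ∑ t ∈ s, (τ t - m t)
  set h : T → ℝ := (s : Set T).indicator fun t => (τ t - m t) / a t
  have hon : ∀ t ∈ s, h t = (τ t - m t) / a t := fun t ht => Set.indicator_of_mem ht _
  have hoff : ∀ t ∉ s, h t = 0 := fun t ht => Set.indicator_of_notMem ht _
  have hasSum_of_sum_eq {p : T → ℝ} {x : ℝ} (hp : ∀ t ∉ s, p t = 0) (hx : ∑ t ∈ s, p t = x) :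
      HasSum p x :=
    hx ▸ hasSum_sum_of_ne_finset_zero hp
  have hsq : HasSum (fun t => h t ^ 2 * a t) C :=
    hasSum_of_sum_eq (fun t ht => by simp [hoff t ht]) <| Finset.sum_congr rfl fun t ht => by
      rw [hon t ht]; field_simp [(ha0 t).ne']
  have hmean : HasSum (fun t => h t * a t) D :=
    hasSum_of_sum_eq (fun t ht => by simp [hoff t ht]) <| Finset.sum_congr rfl fun t ht => by
      rw [hon t ht]; field_simp [(ha0 t).ne']
  have hτh : HasSum (fun t => h t * τ t) (∑ t ∈ s, h t * τ t) :=
    hasSum_of_sum_eq (fun t ht => by simp [hoff t ht]) rfl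
  have hmh : HasSum (fun t => h t * m t) (∑ t ∈ s, h t * m t) :=
    hasSum_of_sum_eq (fun t ht => by simp [hoff t ht]) rfl
  have hdiff : ∑ t ∈ s, h t * τ t - ∑ t ∈ s, h t * m t = C := by
    rw [← Finset.sum_sub_distrib]
    exact Finset.sum_congr rfl fun t ht => by rw [hon t ht]; field_simp [(ha0 t).ne']
  have hDC : D ^ 2 < C := sq_sum_sub_lt_sum_sq_div ha0 ha1 hτ1 hm1 hC
  refine ⟨C ^ 2 / (C - D ^ 2), ⟨h, hsq.summable, hτh.summable, hmh.summable, ?_, ?_⟩, ?_⟩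
  · rw [hsq.tsum_eq, hmean.tsum_eq]; linarith
  · rw [hsq.tsum_eq, hmean.tsum_eq, hτh.tsum_eq, hmh.tsum_eq, hdiff]
  · rw [le_div_iff₀ (by linarith)]
    nlinarith [sq_nonneg D]

lemma nonneg_of_mem_standardizedMeanDifferences {r : ℝ}
    (hr : r ∈ standardizedMeanDifferences τ m a) : 0 ≤ r := by
  obtain ⟨h, -, -, -, hvar, rfl⟩ := hr
  exact div_nonneg (sq_nonneg _) hvar.le

lemma le_tsum_of_mem_standardizedMeanDifferences (ha0 : ∀ t, 0 < a t) (ha1 : HasSum a 1)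
    (hτ1 : HasSum τ 1) (hm1 : HasSum m 1) (hchi : Summable fun t => (τ t - m t) ^ 2 / a t)
    {r : ℝ} (hr : r ∈ standardizedMeanDifferences τ m a) :
    r ≤ ∑' t, (τ t - m t) ^ 2 / a t := by
  obtain ⟨h, hh2, hhτ, hhm, hvar, rfl⟩ := hr
  exact div_le_of_le_mul₀ hvar.le (tsum_nonneg fun t => div_nonneg (sq_nonneg _) (ha0 t).le)
    (sq_tsum_mul_sub_le_chiSq_mul_variance ha0 ha1 hτ1 hm1 hchi hh2 hhτ hhm)

end ChiSquared

theorem chiSquared_is_sup_of_standardized_mean_differences_general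
    {T : Type*} (τ m a : T → ℝ)
    (hτ1 : (∑' t, τ t) = 1)
    (hm1 : (∑' t, m t) = 1)
    (ha0 : ∀ t, 0 < a t) (ha1 : (∑' t, a t) = 1)
    (hchi : Summable fun t => (τ t - m t) ^ 2 / a t) :
    (∑' t, (τ t - m t) ^ 2 / a t) =
      sSup { r : ℝ | ∃ h : T → ℝ,
        Summable (fun t => (h t) ^ 2 * a t) ∧
        Summable (fun t => h t * τ t) ∧
        Summable (fun t => h t * m t) ∧
        0 < (∑' t, (h t) ^ 2 * a t) - (∑' t, h t * a t) ^ 2 ∧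
        r = ((∑' t, h t * τ t) - (∑' t, h t * m t)) ^ 2 /
            ((∑' t, (h t) ^ 2 * a t) - (∑' t, h t * a t) ^ 2) } := by
  change _ = sSup (standardizedMeanDifferences τ m a)
  have hτ := hasSum_of_tsum_eq_of_ne_zero hτ1 one_ne_zero
  have hm := hasSum_of_tsum_eq_of_ne_zero hm1 one_ne_zero
  have ha := hasSum_of_tsum_eq_of_ne_zero ha1 one_ne_zero
  have hle : ∀ r ∈ standardizedMeanDifferences τ m a, r ≤ ∑' t, (τ t - m t) ^ 2 / a t :=
    fun _ => le_tsum_of_mem_standardizedMeanDifferences ha0 ha hτ hm hchi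
  apply le_antisymm
  · refine hchi.tsum_le_of_sum_le fun s => ?_
    rcases le_or_gt (∑ t ∈ s, (τ t - m t) ^ 2 / a t) 0 with hs | hs
    · exact hs.trans (Real.sSup_nonneg fun r => nonneg_of_mem_standardizedMeanDifferences)
    · obtain ⟨r, hr, hsr⟩ := exists_mem_standardizedMeanDifferences_ge ha0 ha hτ hm hs
      exact hsr.trans (le_csSup ⟨_, hle⟩ hr)
  · exact Real.sSup_le hle (tsum_nonneg fun t => div_nonneg (sq_nonneg _) (ha0 t).le)

/-- For probability mass functions `τ`, `m`, `a` on a countable set `T`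
with `a` strictly positive and the generalized chi-squared distance
`χ²_a(τ,m) = Σ_t (τ t - m t)² / a t` finite, the distance equals the supremum over
all functions `h` that are square-summable w.r.t. `a` (with well-defined expectations
under `τ` and `m`) and have positive variance under `a`, of
`(E_τ[h] - E_m[h])² / Var_a(h)`. -/
theorem chiSquared_is_sup_of_standardized_mean_differences
    {T : Type*} [Countable T] (τ m a : T → ℝ)
    (hτ0 : ∀ t, 0 ≤ τ t) (hτ1 : (∑' t, τ t) = 1)
    (hm0 : ∀ t, 0 ≤ m t) (hm1 : (∑' t, m t) = 1)
    (ha0 : ∀ t, 0 < a t) (ha1 : (∑' t, a t) = 1)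
    (hchi : Summable fun t => (τ t - m t) ^ 2 / a t) :
    (∑' t, (τ t - m t) ^ 2 / a t) =
      sSup { r : ℝ | ∃ h : T → ℝ,
        Summable (fun t => (h t) ^ 2 * a t) ∧
        Summable (fun t => h t * τ t) ∧
        Summable (fun t => h t * m t) ∧
        0 < (∑' t, (h t) ^ 2 * a t) - (∑' t, h t * a t) ^ 2 ∧
        r = ((∑' t, h t * τ t) - (∑' t, h t * m t)) ^ 2 /
            ((∑' t, (h t) ^ 2 * a t) - (∑' t, h t * a t) ^ 2) } :=
  chiSquared_is_sup_of_standardized_mean_differences_general τ m a hτ1 hm1 ha0 ha1 hchi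
end

section
/- Let T be a countable set and let τ and m be probability mass functions on T with τ(t) > 0 and m(t) > 0 for all t, and suppose the Kullback–Leibler divergence KL(τ,m) = Σ_t m(t)(log m(t) − log τ(t)) is finite. Then KL(τ,m) equals the supremum of Σ_t h(t)m(t) over all functions h : T → ℝ satisfying Σ_t e^{h(t)} τ(t) ≤ 1; moreover the supremum is attained at h(t) = log(m(t)/τ(t)). -/
/-- For strictly positive probability mass functions `τ`, `m` on a countable
set with finite Kullback–Leibler divergence `KL(τ,m) = Σ_t m t (log (m t) - log (τ t))`,
the divergence is the supremum (indeed the greatest value) of `Σ_t h t * m t` over all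
functions `h` with (well-defined) `Σ_t exp (h t) * τ t ≤ 1`; the supremum is attained
at `h t = log (m t / τ t)`. -/
theorem kullbackLeibler_is_sup_of_linear_functional
    {T : Type*} [Countable T] (τ m : T → ℝ)
    (hτ0 : ∀ t, 0 < τ t) (hτ1 : (∑' t, τ t) = 1)
    (hm0 : ∀ t, 0 < m t) (hm1 : (∑' t, m t) = 1)
    (hKL : Summable fun t => m t * (Real.log (m t) - Real.log (τ t))) :
    IsGreatest
      { r : ℝ | ∃ h : T → ℝ,
          Summable (fun t => h t * m t) ∧
          Summable (fun t => Real.exp (h t) * τ t) ∧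
          (∑' t, Real.exp (h t) * τ t) ≤ 1 ∧
          r = ∑' t, h t * m t }
      (∑' t, m t * (Real.log (m t) - Real.log (τ t))) ∧
    (∑' t, Real.log (m t / τ t) * m t) =
      ∑' t, m t * (Real.log (m t) - Real.log (τ t)) := by
  have hmS : Summable m := by
    by_contra hc
    rw [tsum_eq_zero_of_not_summable hc] at hm1
    norm_num at hm1
  have hkey : ∀ t, Real.log (m t / τ t) * m t = m t * (Real.log (m t) - Real.log (τ t)) := by
    intro t
    rw [Real.log_div (hm0 t).ne' (hτ0 t).ne', mul_comm]
  have hattain : (∑' t, Real.log (m t / τ t) * m t) =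
      ∑' t, m t * (Real.log (m t) - Real.log (τ t)) := by
    exact tsum_congr hkey
  refine ⟨⟨⟨fun t => Real.log (m t / τ t), ?_, ?_, ?_, hattain.symm⟩, ?_⟩, hattain⟩
  · simpa only [hkey] using hKL
  · have : (fun t => Real.exp (Real.log (m t / τ t)) * τ t) = m := by
      funext t
      rw [Real.exp_log (div_pos (hm0 t) (hτ0 t)), div_mul_cancel₀ _ (hτ0 t).ne']
    rw [this]; exact hmS
  · have : (fun t => Real.exp (Real.log (m t / τ t)) * τ t) = m := by
      funext t
      rw [Real.exp_log (div_pos (hm0 t) (hτ0 t)), div_mul_cancel₀ _ (hτ0 t).ne']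
    rw [this, hm1]
  · rintro r ⟨h, hhm, hexp, hle, rfl⟩
    have hpt : ∀ t, h t * m t ≤
        m t * (Real.log (m t) - Real.log (τ t)) + (Real.exp (h t) * τ t - m t) := by
      intro t
      have ha : h t + Real.log (τ t) - Real.log (m t) + 1 ≤
          Real.exp (h t + Real.log (τ t) - Real.log (m t)) := by
        linarith [Real.add_one_le_exp (h t + Real.log (τ t) - Real.log (m t))]
      have he : Real.exp (h t + Real.log (τ t) - Real.log (m t)) =
          Real.exp (h t) * τ t / m t := by
        rw [Real.exp_sub, Real.exp_add, Real.exp_log (hτ0 t), Real.exp_log (hm0 t)]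
      rw [he] at ha
      have hm := hm0 t
      have := mul_le_mul_of_nonneg_right ha hm.le
      rw [div_mul_cancel₀ _ hm.ne'] at this
      nlinarith
    have hRS : Summable (fun t => m t * (Real.log (m t) - Real.log (τ t))
        + (Real.exp (h t) * τ t - m t)) := hKL.add (hexp.sub hmS)
    have := Summable.tsum_le_tsum hpt hhm hRS
    rw [Summable.tsum_add hKL (hexp.sub hmS), Summable.tsum_sub hexp hmS, hm1] at this
    linarith
end

section
/- Let T be a countable set, let τ and m be probability mass functions on T, and let 0 < α < 1 with ᾱ = 1 − α. Assume α√(τ(t)) + ᾱ√(m(t)) > 0 for all t and that D = Σ_t (τ(t) − m(t))² / (α√(τ(t)) + ᾱ√(m(t)))² is finite. Then the supremum of Σ_t h(t)(τ(t) − m(t)) over all functions h : T → ℝ satisfying Σ_t h(t)²(α√(τ(t)) + ᾱ√(m(t)))² ≤ 1 equals √D, i.e., equals √2 times the blended weighted Hellinger distance BWHD_α(τ,m). -/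
/-!
Writing `f = (τ - m) / w` with `w = α√τ + ᾱ√m`, the substitution `u = h w` turns the weighted
constraint into `∑ u² ≤ 1` and the functional into `∑ u f`. By Cauchy–Schwarz this is at most
`‖f‖₂ = √D`, and `u = f / ‖f‖₂` attains the bound.
-/

open Real

section

variable {T : Type*}

theorem tsum_mul_le_sqrt_mul_sqrt {u f : T → ℝ} (hu : Summable fun t => u t ^ 2)
    (hf : Summable fun t => f t ^ 2) :
    ∑' t, u t * f t ≤ √(∑' t, u t ^ 2) * √(∑' t, f t ^ 2) := by
  by_cases huf : Summable fun t => u t * f t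
  · refine huf.tsum_le_of_sum_le fun s => ?_
    calc ∑ t ∈ s, u t * f t ≤ √(∑ t ∈ s, u t ^ 2) * √(∑ t ∈ s, f t ^ 2) :=
          sum_mul_le_sqrt_mul_sqrt s u f
      _ ≤ √(∑' t, u t ^ 2) * √(∑' t, f t ^ 2) := by
          gcongr
          · exact hu.sum_le_tsum s fun t _ => sq_nonneg _
          · exact hf.sum_le_tsum s fun t _ => sq_nonneg _
  · rw [tsum_eq_zero_of_not_summable huf]
    positivity

theorem sSup_tsum_mul_of_tsum_sq_le_one {f : T → ℝ} (hf : Summable fun t => f t ^ 2) :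
    sSup { r : ℝ | ∃ u : T → ℝ,
        Summable (fun t => u t * f t) ∧ Summable (fun t => u t ^ 2) ∧
        (∑' t, u t ^ 2) ≤ 1 ∧ r = ∑' t, u t * f t } = √(∑' t, f t ^ 2) := by
  set S := ∑' t, f t ^ 2
  have hS : 0 ≤ S := tsum_nonneg fun t => sq_nonneg _
  have upper : ∀ u : T → ℝ, Summable (fun t => u t ^ 2) → (∑' t, u t ^ 2) ≤ 1 →
      ∑' t, u t * f t ≤ √S := fun u hu hu1 =>
    calc ∑' t, u t * f t ≤ √(∑' t, u t ^ 2) * √S := tsum_mul_le_sqrt_mul_sqrt hu hf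
      _ ≤ 1 * √S := by gcongr; exact sqrt_le_one.mpr hu1
      _ = √S := one_mul _
  have attained : √S ∈ { r : ℝ | ∃ u : T → ℝ,
      Summable (fun t => u t * f t) ∧ Summable (fun t => u t ^ 2) ∧
      (∑' t, u t ^ 2) ≤ 1 ∧ r = ∑' t, u t * f t } := by
    have hmul : ∀ t, f t / √S * f t = f t ^ 2 / √S := fun t => by ring
    have hsq : ∀ t, (f t / √S) ^ 2 = f t ^ 2 / S := fun t => by rw [div_pow, sq_sqrt hS]
    -- when `S = 0` the witness is `u = 0`, through `x / 0 = 0`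
    refine ⟨fun t => f t / √S, ?_, ?_, ?_, ?_⟩
    · simpa only [hmul] using hf.div_const _
    · simpa only [hsq] using hf.div_const _
    · simpa only [hsq, tsum_div_const] using div_self_le_one S
    · simp only [hmul, tsum_div_const]
      exact (div_sqrt).symm
  refine le_antisymm (csSup_le ⟨_, attained⟩ ?_) (le_csSup ⟨√S, ?_⟩ attained) <;>
    rintro r ⟨u, -, hu, hu1, rfl⟩ <;> exact upper u hu hu1

theorem sSup_tsum_mul_of_weighted_tsum_sq_le_one {g w : T → ℝ} (hw : ∀ t, w t ≠ 0)
    (hg : Summable fun t => g t ^ 2 / w t ^ 2) :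
    sSup { r : ℝ | ∃ h : T → ℝ,
        Summable (fun t => h t * g t) ∧ Summable (fun t => h t ^ 2 * w t ^ 2) ∧
        (∑' t, h t ^ 2 * w t ^ 2) ≤ 1 ∧ r = ∑' t, h t * g t } =
      √(∑' t, g t ^ 2 / w t ^ 2) := by
  have hfg : ∀ t, g t ^ 2 / w t ^ 2 = (g t / w t) ^ 2 := fun t => (div_pow _ _ _).symm
  simp only [hfg] at hg ⊢
  rw [← sSup_tsum_mul_of_tsum_sq_le_one hg]
  congr 1
  ext r
  constructor
  · rintro ⟨h, h1, h2, h3, rfl⟩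
    have hmul : ∀ t, h t * w t * (g t / w t) = h t * g t := fun t => by field_simp [hw t]
    refine ⟨fun t => h t * w t, ?_⟩
    simp only [hmul, mul_pow]
    exact ⟨h1, h2, h3, trivial⟩
  · rintro ⟨u, h1, h2, h3, rfl⟩
    have hmul : ∀ t, u t / w t * g t = u t * (g t / w t) := fun t => by ring
    have hsq : ∀ t, (u t / w t) ^ 2 * w t ^ 2 = u t ^ 2 := fun t => by field_simp [hw t]
    refine ⟨fun t => u t / w t, ?_⟩
    simp only [hmul, hsq]
    exact ⟨h1, h2, h3, trivial⟩

theorem sqrt_tsum_div_eq_sqrt_two_mul_sqrt_tsum_div_two_mul (a b : T → ℝ) :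
    √(∑' t, a t / b t) = √2 * √(∑' t, a t / (2 * b t)) := by
  simp only [div_mul_eq_div_div_swap, tsum_div_const]
  rw [← sqrt_mul zero_le_two, mul_div_cancel₀ _ two_ne_zero]

end

theorem bwhd_is_sup_of_linear_functional_general
    {T : Type*} (τ m : T → ℝ) (α : ℝ)
    (hw : ∀ t, 0 < α * Real.sqrt (τ t) + (1 - α) * Real.sqrt (m t))
    (hD : Summable fun t =>
      (τ t - m t) ^ 2 / (α * Real.sqrt (τ t) + (1 - α) * Real.sqrt (m t)) ^ 2) :
    sSup { r : ℝ | ∃ h : T → ℝ,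
        Summable (fun t => h t * (τ t - m t)) ∧
        Summable (fun t =>
          (h t) ^ 2 * (α * Real.sqrt (τ t) + (1 - α) * Real.sqrt (m t)) ^ 2) ∧
        (∑' t, (h t) ^ 2 * (α * Real.sqrt (τ t) + (1 - α) * Real.sqrt (m t)) ^ 2) ≤ 1 ∧
        r = ∑' t, h t * (τ t - m t) } =
      Real.sqrt (∑' t, (τ t - m t) ^ 2 /
        (α * Real.sqrt (τ t) + (1 - α) * Real.sqrt (m t)) ^ 2) ∧
    Real.sqrt (∑' t, (τ t - m t) ^ 2 /
        (α * Real.sqrt (τ t) + (1 - α) * Real.sqrt (m t)) ^ 2) =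
      Real.sqrt 2 * Real.sqrt (∑' t, (τ t - m t) ^ 2 /
        (2 * (α * Real.sqrt (τ t) + (1 - α) * Real.sqrt (m t)) ^ 2)) :=
  ⟨sSup_tsum_mul_of_weighted_tsum_sq_le_one (fun t => (hw t).ne') hD,
    sqrt_tsum_div_eq_sqrt_two_mul_sqrt_tsum_div_two_mul _ _⟩

/-- For probability mass functions `τ`, `m` on a countable set and
`0 < α < 1` with `ᾱ = 1 - α`, assuming `α√(τ t) + ᾱ√(m t) > 0` for all `t` and
`D = Σ_t (τ t - m t)² / (α√(τ t) + ᾱ√(m t))²` finite, the supremum of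
`Σ_t h t (τ t - m t)` over all `h` with `Σ_t h t² (α√(τ t) + ᾱ√(m t))² ≤ 1`
equals `√D`, i.e. `√2` times the blended weighted Hellinger distance `BWHD_α(τ,m)`. -/
theorem bwhd_is_sup_of_linear_functional
    {T : Type*} [Countable T] (τ m : T → ℝ) (α : ℝ)
    (hα0 : 0 < α) (hα1 : α < 1)
    (hτ0 : ∀ t, 0 ≤ τ t) (hτ1 : (∑' t, τ t) = 1)
    (hm0 : ∀ t, 0 ≤ m t) (hm1 : (∑' t, m t) = 1)
    (hw : ∀ t, 0 < α * Real.sqrt (τ t) + (1 - α) * Real.sqrt (m t))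
    (hD : Summable fun t =>
      (τ t - m t) ^ 2 / (α * Real.sqrt (τ t) + (1 - α) * Real.sqrt (m t)) ^ 2) :
    sSup { r : ℝ | ∃ h : T → ℝ,
        Summable (fun t => h t * (τ t - m t)) ∧
        Summable (fun t =>
          (h t) ^ 2 * (α * Real.sqrt (τ t) + (1 - α) * Real.sqrt (m t)) ^ 2) ∧
        (∑' t, (h t) ^ 2 * (α * Real.sqrt (τ t) + (1 - α) * Real.sqrt (m t)) ^ 2) ≤ 1 ∧
        r = ∑' t, h t * (τ t - m t) } =
      Real.sqrt (∑' t, (τ t - m t) ^ 2 /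
        (α * Real.sqrt (τ t) + (1 - α) * Real.sqrt (m t)) ^ 2) ∧
    Real.sqrt (∑' t, (τ t - m t) ^ 2 /
        (α * Real.sqrt (τ t) + (1 - α) * Real.sqrt (m t)) ^ 2) =
      Real.sqrt 2 * Real.sqrt (∑' t, (τ t - m t) ^ 2 /
        (2 * (α * Real.sqrt (τ t) + (1 - α) * Real.sqrt (m t)) ^ 2)) :=
  bwhd_is_sup_of_linear_functional_general τ m α hw hD
end

section
/- If a, b, c are real numbers with 0 ≤ a ≤ b ≤ c and c > 0 (so that all denominators below with positive sum are nonzero, interpreting a quotient with zero denominator as 0), then (c − a)/√(c + a) ≤ (b − a)/√(b + a) + (c − b)/√(c + b). -/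
/-- For real numbers `0 ≤ a ≤ b ≤ c` with `c > 0` (a quotient with zero
denominator being interpreted as `0`),
`(c - a)/√(c + a) ≤ (b - a)/√(b + a) + (c - b)/√(c + b)`. -/
theorem sqrt_ratio_triangle_of_monotone
    (a b c : ℝ) (ha : 0 ≤ a) (hab : a ≤ b) (hbc : b ≤ c) (hc : 0 < c) :
    (c - a) / Real.sqrt (c + a) ≤
      (b - a) / Real.sqrt (b + a) + (c - b) / Real.sqrt (c + b) := by
  rcases eq_or_lt_of_le (by linarith : (0:ℝ) ≤ b + a) with h | h
  · have ha0 : a = 0 := by linarith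
    have hb0 : b = 0 := by linarith
    subst ha0; subst hb0
    simp
  · set u := Real.sqrt (b + a) with hu_def
    set v := Real.sqrt (c + b) with hv_def
    set w := Real.sqrt (c + a) with hw_def
    have hu : 0 < u := Real.sqrt_pos.mpr h
    have hv : 0 < v := Real.sqrt_pos.mpr (by linarith)
    have hw : 0 < w := Real.sqrt_pos.mpr (by linarith)
    have hu2 : u ^ 2 = b + a := Real.sq_sqrt (by linarith)
    have hv2 : v ^ 2 = c + b := Real.sq_sqrt (by linarith)
    have hw2 : w ^ 2 = c + a := Real.sq_sqrt (by linarith)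
    have huw : u ≤ w := Real.sqrt_le_sqrt (by linarith)
    have hwv : w ≤ v := Real.sqrt_le_sqrt (by linarith)
    have key : u * v * (v ^ 2 - u ^ 2) ≤ v * w * (v ^ 2 - w ^ 2) + u * w * (w ^ 2 - u ^ 2) := by
      nlinarith [mul_nonneg (mul_nonneg (mul_nonneg (sub_nonneg.mpr (huw.trans hwv))
        (sub_nonneg.mpr huw)) (sub_nonneg.mpr hwv)) (by positivity : (0:ℝ) ≤ u + v + w)]
    have hba : b - a = v ^ 2 - w ^ 2 := by rw [hv2, hw2]; ring
    have hcb : c - b = w ^ 2 - u ^ 2 := by rw [hw2, hu2]; ring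
    have hca : c - a = v ^ 2 - u ^ 2 := by rw [hv2, hu2]; ring
    rw [hba, hcb, hca, div_add_div _ _ (ne_of_gt hu) (ne_of_gt hv),
      div_le_div_iff₀ hw (by positivity)]
    nlinarith [key, mul_pos hu hv, mul_pos hv hw, mul_pos hu hw, hw.le]
end

section
/- If a, b, c are real numbers with a ≥ 0, b ≥ 0, c ≥ 0 (interpreting a quotient with zero denominator as 0), then |c − a|/√(c + a) ≤ |b − a|/√(b + a) + |c − b|/√(c + b). -/
lemma abs_sqrt_ratio_key
    (a b c : ℝ) (ha : 0 ≤ a) (hb : 0 ≤ b) (hc : 0 ≤ c) (hac : a ≤ c) :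
    |c - a| / Real.sqrt (c + a) ≤
      |b - a| / Real.sqrt (b + a) + |c - b| / Real.sqrt (c + b) := by
  rcases le_or_gt b a with hba | hab
  · -- b ≤ a ≤ c
    have h1 : |c - a| = c - a := abs_of_nonneg (by linarith)
    have h2 : |c - b| = c - b := abs_of_nonneg (by linarith)
    rw [h1, h2]
    have hnn : (0:ℝ) ≤ |b - a| / Real.sqrt (b + a) :=
      div_nonneg (abs_nonneg _) (Real.sqrt_nonneg _)
    rcases eq_or_lt_of_le (by linarith : (0:ℝ) ≤ c + b) with hzero | hpos
    · have hb0 : b = 0 := by linarith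
      have hc0 : c = 0 := by linarith
      have ha0 : a = 0 := by linarith
      simp [ha0, hb0, hc0]
    · have key : (c - a) / Real.sqrt (c + a) ≤ (c - b) / Real.sqrt (c + b) := by
        apply div_le_div₀ (by linarith) (by linarith) (Real.sqrt_pos.mpr hpos)
        exact Real.sqrt_le_sqrt (by linarith)
      linarith
  · rcases le_or_gt c b with hcb | hbc
    · -- a ≤ c ≤ b
      have h1 : |c - a| = c - a := abs_of_nonneg (by linarith)
      have h2 : |b - a| = b - a := abs_of_nonneg (by linarith)
      rw [h1, h2]
      have hnn : (0:ℝ) ≤ |c - b| / Real.sqrt (c + b) :=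
        div_nonneg (abs_nonneg _) (Real.sqrt_nonneg _)
      rcases eq_or_lt_of_le (by linarith : (0:ℝ) ≤ c + a) with hzero | hpos
      · have ha0 : a = 0 := by linarith
        have hc0 : c = 0 := by linarith
        simp [ha0, hc0]
        positivity
      · have hba : (0:ℝ) < b + a := by linarith
        set x := Real.sqrt (c + a) with hxdef
        set y := Real.sqrt (b + a) with hydef
        have hx : x ^ 2 = c + a := Real.sq_sqrt (by linarith)
        have hy : y ^ 2 = b + a := Real.sq_sqrt (by linarith)
        have hx0 : 0 < x := Real.sqrt_pos.mpr hpos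
        have hy0 : 0 < y := Real.sqrt_pos.mpr hba
        have hxy : x ≤ y := Real.sqrt_le_sqrt (by linarith)
        have key : (c - a) / x ≤ (b - a) / y := by
          rw [div_le_div_iff₀ hx0 hy0]
          nlinarith [mul_nonneg (sub_nonneg.2 hxy) (mul_pos hx0 hy0).le,
            mul_nonneg (sub_nonneg.2 hxy) ha]
        linarith
    · -- a < b < c
      have h1 : |c - a| = c - a := abs_of_nonneg (by linarith)
      have h2 : |b - a| = b - a := abs_of_nonneg (by linarith)
      have h3 : |c - b| = c - b := abs_of_nonneg (by linarith)
      rw [h1, h2, h3]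
      have hua : (0:ℝ) < b + a := by linarith
      have hwa : (0:ℝ) < c + a := by linarith
      have hva : (0:ℝ) < c + b := by linarith
      set u := Real.sqrt (b + a) with hudef
      set v := Real.sqrt (c + b) with hvdef
      set w := Real.sqrt (c + a) with hwdef
      have hu : u ^ 2 = b + a := Real.sq_sqrt hua.le
      have hv : v ^ 2 = c + b := Real.sq_sqrt hva.le
      have hw : w ^ 2 = c + a := Real.sq_sqrt hwa.le
      have hu0 : 0 < u := Real.sqrt_pos.mpr hua
      have hv0 : 0 < v := Real.sqrt_pos.mpr hva
      have hw0 : 0 < w := Real.sqrt_pos.mpr hwa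
      have huw : u ≤ w := Real.sqrt_le_sqrt (by linarith)
      have hwv : w ≤ v := Real.sqrt_le_sqrt (by linarith)
      rw [div_add_div _ _ (ne_of_gt hu0) (ne_of_gt hv0),
        div_le_div_iff₀ hw0 (mul_pos hu0 hv0)]
      nlinarith [mul_nonneg (mul_nonneg (mul_nonneg (sub_nonneg.2 (huw.trans hwv))
          (sub_nonneg.2 huw)) (sub_nonneg.2 hwv))
          (by positivity : (0:ℝ) ≤ u + v + w),
        mul_pos hu0 hv0, mul_pos hv0 hw0, mul_pos hu0 hw0]

/-- For real numbers `a, b, c ≥ 0` (a quotient with zero denominator being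
interpreted as `0`), `|c - a|/√(c + a) ≤ |b - a|/√(b + a) + |c - b|/√(c + b)`. -/
theorem abs_sqrt_ratio_triangle
    (a b c : ℝ) (ha : 0 ≤ a) (hb : 0 ≤ b) (hc : 0 ≤ c) :
    |c - a| / Real.sqrt (c + a) ≤
      |b - a| / Real.sqrt (b + a) + |c - b| / Real.sqrt (c + b) := by
  rcases le_total a c with h | h
  · exact abs_sqrt_ratio_key a b c ha hb hc h
  · have := abs_sqrt_ratio_key c b a hc hb ha h
    rw [abs_sub_comm a c, add_comm a c, abs_sub_comm b c, add_comm b c,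
      abs_sub_comm a b, add_comm a b] at this
    linarith
end

section
/- Let T be a countable set and let τ, g, m be probability mass functions on T. Then the square roots of the symmetric chi-squared distances satisfy the triangle inequality: √(S²(τ,m)) ≤ √(S²(τ,g)) + √(S²(g,m)). -/
open Real

-- core triangle inequality for |a-c|/sqrt(a+c), assuming a ≤ c
lemma core_le (a b c : ℝ) (ha : 0 ≤ a) (hb : 0 ≤ b) (hc : 0 ≤ c) (hac : a ≤ c) :
    |a - c| / Real.sqrt (a + c) ≤
      |a - b| / Real.sqrt (a + b) + |b - c| / Real.sqrt (b + c) := by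
  rcases eq_or_lt_of_le (add_nonneg ha hc) with h0 | hacpos
  · have ha0 : a = 0 := by linarith [ha, hc, h0.symm ▸ (by linarith : a + c = a + c)]
    have hc0 : c = 0 := by linarith [ha, hc]
    simp [ha0, hc0]
    positivity
  have hcpos : 0 < c := by
    rcases lt_or_ge 0 c with h | h
    · exact h
    · have : c = 0 := le_antisymm h hc
      have : a = 0 := le_antisymm (this ▸ hac) ha
      linarith
  rcases le_total b a with hba | hab
  · -- b ≤ a: second RHS term alone suffices
    have h1 : |a - c| = c - a := by rw [abs_sub_comm]; exact abs_of_nonneg (by linarith)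
    have h2 : |b - c| = c - b := by rw [abs_sub_comm]; exact abs_of_nonneg (by linarith)
    rw [h1, h2]
    have hbc : (0:ℝ) < b + c := by linarith
    have : (c - a) / Real.sqrt (a + c) ≤ (c - b) / Real.sqrt (b + c) := by
      apply div_le_div₀ (by linarith) (by linarith) (Real.sqrt_pos.mpr hbc)
      exact Real.sqrt_le_sqrt (by linarith)
    refine this.trans ?_
    have : 0 ≤ |a - b| / Real.sqrt (a + b) := by positivity
    linarith
  rcases le_total c b with hcb | hbc
  · -- c ≤ b: first RHS term alone suffices
    have h1 : |a - c| = c - a := by rw [abs_sub_comm]; exact abs_of_nonneg (by linarith)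
    have h2 : |a - b| = b - a := by rw [abs_sub_comm]; exact abs_of_nonneg (by linarith)
    rw [h1, h2]
    have habp : (0:ℝ) < a + b := by linarith
    have key : (c - a) / Real.sqrt (a + c) ≤ (b - a) / Real.sqrt (a + b) := by
      rw [div_le_div_iff₀ (Real.sqrt_pos.mpr hacpos) (Real.sqrt_pos.mpr habp)]
      have h3 : (c - a) * Real.sqrt (a + b) = Real.sqrt ((c - a)^2 * (a + b)) := by
        rw [Real.sqrt_mul (sq_nonneg _), Real.sqrt_sq (by linarith)]
      have h4 : (b - a) * Real.sqrt (a + c) = Real.sqrt ((b - a)^2 * (a + c)) := by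
        rw [Real.sqrt_mul (sq_nonneg _), Real.sqrt_sq (by linarith)]
      rw [h3, h4]
      apply Real.sqrt_le_sqrt
      have h5 : 0 ≤ (b - c) * (b * c - a ^ 2) := by
        apply mul_nonneg (by linarith)
        nlinarith [mul_le_mul hac hcb hc hc]
      have h6 : 0 ≤ a * ((b - c) * (b + c - 2 * a)) := by
        apply mul_nonneg ha
        apply mul_nonneg (by linarith) (by linarith)
      nlinarith [h5, h6]
    refine key.trans ?_
    have : 0 ≤ |b - c| / Real.sqrt (b + c) := by positivity
    linarith
  · -- a ≤ b ≤ c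
    have h1 : |a - c| = c - a := by rw [abs_sub_comm]; exact abs_of_nonneg (by linarith)
    have h2 : |a - b| = b - a := by rw [abs_sub_comm]; exact abs_of_nonneg (by linarith)
    have h3 : |b - c| = c - b := by rw [abs_sub_comm]; exact abs_of_nonneg (by linarith)
    rw [h1, h2, h3]
    rcases eq_or_lt_of_le (add_nonneg ha hb) with hab0 | habpos
    · -- a = b = 0
      have ha0 : a = 0 := by nlinarith [ha, hb]
      have hb0 : b = 0 := by nlinarith [ha, hb]
      rw [ha0, hb0]
      simp
    have hbcpos : (0:ℝ) < b + c := by linarith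
    set x := Real.sqrt (a + b) with hxdef
    set z := Real.sqrt (a + c) with hzdef
    set y := Real.sqrt (b + c) with hydef
    have hx : 0 < x := Real.sqrt_pos.mpr habpos
    have hz : 0 < z := Real.sqrt_pos.mpr hacpos
    have hy : 0 < y := Real.sqrt_pos.mpr hbcpos
    have hx2 : x ^ 2 = a + b := Real.sq_sqrt (by linarith)
    have hz2 : z ^ 2 = a + c := Real.sq_sqrt (by linarith)
    have hy2 : y ^ 2 = b + c := Real.sq_sqrt (by linarith)
    have hxz : x ≤ z := Real.sqrt_le_sqrt (by linarith)
    have hzy : z ≤ y := Real.sqrt_le_sqrt (by linarith)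
    rw [div_add_div _ _ (ne_of_gt hx) (ne_of_gt hy), div_le_div_iff₀ hz (by positivity)]
    -- goal: (c - a) * (x * y) ≤ ((b - a) * y + (c - b) * x) * z
    have hp : b - a = y^2 - z^2 := by rw [hy2, hz2]; ring
    have hq : c - b = z^2 - x^2 := by rw [hz2, hx2]; ring
    have hca : c - a = y^2 - x^2 := by rw [hy2, hx2]; ring
    rw [hp, hq, hca]
    nlinarith [mul_nonneg (mul_nonneg (mul_nonneg (sub_nonneg.2 (hxz.trans hzy))
      (sub_nonneg.2 hzy)) (sub_nonneg.2 hxz)) (by positivity : (0:ℝ) ≤ x + y + z)]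

lemma core (a b c : ℝ) (ha : 0 ≤ a) (hb : 0 ≤ b) (hc : 0 ≤ c) :
    |a - c| / Real.sqrt (a + c) ≤
      |a - b| / Real.sqrt (a + b) + |b - c| / Real.sqrt (b + c) := by
  rcases le_total a c with h | h
  · exact core_le a b c ha hb hc h
  · have := core_le c b a hc hb ha h
    rw [abs_sub_comm c a, add_comm c a] at this
    rw [abs_sub_comm c b, add_comm c b, abs_sub_comm b a, add_comm b a] at this
    linarith

lemma term_eq (a c : ℝ) (ha : 0 ≤ a) (hc : 0 ≤ c) :
    Real.sqrt (2 * (a - c) ^ 2 / (a + c)) =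
      Real.sqrt 2 * (|a - c| / Real.sqrt (a + c)) := by
  rw [Real.sqrt_div (by positivity), Real.sqrt_mul (by norm_num), Real.sqrt_sq_eq_abs,
    mul_div_assoc]

lemma term_le_bound (a c : ℝ) (ha : 0 ≤ a) (hc : 0 ≤ c) :
    2 * (a - c) ^ 2 / (a + c) ≤ 2 * (a + c) := by
  rcases eq_or_lt_of_le (add_nonneg ha hc) with h | h
  · rw [← h]
    simp
  · rw [div_le_iff₀ h]
    nlinarith [mul_nonneg ha hc]

theorem symmetric_chiSquared_sqrt_triangle_inequality'
    {T : Type*} [Countable T] (τ g m : T → ℝ)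
    (hτ0 : ∀ t, 0 ≤ τ t) (hτ1 : (∑' t, τ t) = 1)
    (hg0 : ∀ t, 0 ≤ g t) (hg1 : (∑' t, g t) = 1)
    (hm0 : ∀ t, 0 ≤ m t) (hm1 : (∑' t, m t) = 1) :
    Real.sqrt (∑' t, 2 * (τ t - m t) ^ 2 / (τ t + m t)) ≤
      Real.sqrt (∑' t, 2 * (τ t - g t) ^ 2 / (τ t + g t)) +
      Real.sqrt (∑' t, 2 * (g t - m t) ^ 2 / (g t + m t)) := by
  have sum_of_one : ∀ (p : T → ℝ), (∑' t, p t) = 1 → Summable p := by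
    intro p hp
    by_contra h
    rw [tsum_eq_zero_of_not_summable h] at hp
    norm_num at hp
  have sτ := sum_of_one τ hτ1
  have sg := sum_of_one g hg1
  have sm := sum_of_one m hm1
  have keyS : ∀ (p q : T → ℝ), (∀ t, 0 ≤ p t) → (∀ t, 0 ≤ q t) → Summable p → Summable q →
      Summable (fun t => 2 * (p t - q t) ^ 2 / (p t + q t)) := by
    intro p q hp hq sp sq
    apply Summable.of_nonneg_of_le
      (fun t => div_nonneg (by positivity) (add_nonneg (hp t) (hq t)))
      (fun t => term_le_bound (p t) (q t) (hp t) (hq t))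
    exact (sp.add sq).mul_left 2
  have hW := keyS τ m hτ0 hm0 sτ sm
  have hW1 := keyS τ g hτ0 hg0 sτ sg
  have hW2 := keyS g m hg0 hm0 sg sm
  set W : T → ℝ := fun t => 2 * (τ t - m t) ^ 2 / (τ t + m t) with hWdef
  set W1 : T → ℝ := fun t => 2 * (τ t - g t) ^ 2 / (τ t + g t) with hW1def
  set W2 : T → ℝ := fun t => 2 * (g t - m t) ^ 2 / (g t + m t) with hW2def
  have hWnn : ∀ t, 0 ≤ W t := fun t => div_nonneg (by positivity) (add_nonneg (hτ0 t) (hm0 t))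
  have hW1nn : ∀ t, 0 ≤ W1 t := fun t => div_nonneg (by positivity) (add_nonneg (hτ0 t) (hg0 t))
  have hW2nn : ∀ t, 0 ≤ W2 t := fun t => div_nonneg (by positivity) (add_nonneg (hg0 t) (hm0 t))
  set Y := ∑' t, W1 t with hYdef
  set Z := ∑' t, W2 t with hZdef
  have hY0 : 0 ≤ Y := tsum_nonneg hW1nn
  have hZ0 : 0 ≤ Z := tsum_nonneg hW2nn
  have hB : 0 ≤ Real.sqrt Y + Real.sqrt Z := by positivity
  suffices hsum : (∑' t, W t) ≤ (Real.sqrt Y + Real.sqrt Z) ^ 2 by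
    calc Real.sqrt (∑' t, W t) ≤ Real.sqrt ((Real.sqrt Y + Real.sqrt Z) ^ 2) :=
          Real.sqrt_le_sqrt hsum
      _ = Real.sqrt Y + Real.sqrt Z := Real.sqrt_sq hB
  apply Summable.tsum_le_of_sum_le hW
  intro s
  set y : T → ℝ := fun t => Real.sqrt (W1 t) with hydef
  set z : T → ℝ := fun t => Real.sqrt (W2 t) with hzdef
  have pointwise : ∀ t, Real.sqrt (W t) ≤ y t + z t := by
    intro t
    rw [hydef, hzdef]
    simp only [hWdef, hW1def, hW2def]
    rw [term_eq _ _ (hτ0 t) (hm0 t), term_eq _ _ (hτ0 t) (hg0 t), term_eq _ _ (hg0 t) (hm0 t)]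
    rw [← mul_add]
    exact mul_le_mul_of_nonneg_left (core (τ t) (g t) (m t) (hτ0 t) (hg0 t) (hm0 t))
      (Real.sqrt_nonneg 2)
  have hy2 : ∀ t, y t ^ 2 = W1 t := fun t => Real.sq_sqrt (hW1nn t)
  have hz2 : ∀ t, z t ^ 2 = W2 t := fun t => Real.sq_sqrt (hW2nn t)
  calc ∑ t ∈ s, W t ≤ ∑ t ∈ s, (y t + z t) ^ 2 := by
        apply Finset.sum_le_sum
        intro t _
        rw [← Real.sq_sqrt (hWnn t)]
        exact pow_le_pow_left₀ (Real.sqrt_nonneg _) (pointwise t) 2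
    _ = (∑ t ∈ s, y t ^ 2) + 2 * (∑ t ∈ s, y t * z t) + ∑ t ∈ s, z t ^ 2 := by
        rw [Finset.mul_sum, ← Finset.sum_add_distrib, ← Finset.sum_add_distrib]
        apply Finset.sum_congr rfl
        intros
        ring
    _ ≤ Y + 2 * (Real.sqrt Y * Real.sqrt Z) + Z := by
        have hYs : (∑ t ∈ s, y t ^ 2) ≤ Y := by
          simp_rw [hy2]
          exact Summable.sum_le_tsum s (fun t _ => hW1nn t) hW1
        have hZs : (∑ t ∈ s, z t ^ 2) ≤ Z := by
          simp_rw [hz2]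
          exact Summable.sum_le_tsum s (fun t _ => hW2nn t) hW2
        have hCS : (∑ t ∈ s, y t * z t) ≤
            Real.sqrt (∑ t ∈ s, y t ^ 2) * Real.sqrt (∑ t ∈ s, z t ^ 2) :=
          Real.sum_mul_le_sqrt_mul_sqrt s y z
        have h1 : Real.sqrt (∑ t ∈ s, y t ^ 2) ≤ Real.sqrt Y := Real.sqrt_le_sqrt hYs
        have h2 : Real.sqrt (∑ t ∈ s, z t ^ 2) ≤ Real.sqrt Z := Real.sqrt_le_sqrt hZs
        have : (∑ t ∈ s, y t * z t) ≤ Real.sqrt Y * Real.sqrt Z :=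
          hCS.trans (mul_le_mul h1 h2 (Real.sqrt_nonneg _) (Real.sqrt_nonneg _))
        linarith
    _ = (Real.sqrt Y + Real.sqrt Z) ^ 2 := by
        rw [add_sq, Real.sq_sqrt hY0, Real.sq_sqrt hZ0]
        ring

/-- For probability mass functions `τ`, `g`, `m` on a countable set, the
square roots of the symmetric chi-squared distances
`S²(τ,m) = Σ_t 2(τ t - m t)²/(τ t + m t)` (summands with zero denominator interpreted
as `0`) satisfy the triangle inequality. -/
theorem symmetric_chiSquared_sqrt_triangle_inequality
    {T : Type*} [Countable T] (τ g m : T → ℝ)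
    (hτ0 : ∀ t, 0 ≤ τ t) (hτ1 : (∑' t, τ t) = 1)
    (hg0 : ∀ t, 0 ≤ g t) (hg1 : (∑' t, g t) = 1)
    (hm0 : ∀ t, 0 ≤ m t) (hm1 : (∑' t, m t) = 1) :
    Real.sqrt (∑' t, 2 * (τ t - m t) ^ 2 / (τ t + m t)) ≤
      Real.sqrt (∑' t, 2 * (τ t - g t) ^ 2 / (τ t + g t)) +
      Real.sqrt (∑' t, 2 * (g t - m t) ^ 2 / (g t + m t)) := by
  exact symmetric_chiSquared_sqrt_triangle_inequality' τ g m hτ0 hτ1 hg0 hg1 hm0 hm1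
end

section
/- Let T be a countable set. The map (τ, m) ↦ √(S²(τ,m)) is a metric on the set of probability mass functions on T: it is nonnegative, equals zero if and only if τ = m, is symmetric, and satisfies the triangle inequality. -/
/-- The symmetric chi-squared distance `S²(τ,m) = Σ_t 2(τ t - m t)²/(τ t + m t)`,
where a summand with zero denominator is interpreted as `0`. -/
noncomputable def symmChiSq {T : Type*} (τ m : T → ℝ) : ℝ :=
  ∑' t, 2 * (τ t - m t) ^ 2 / (τ t + m t)

private lemma key_poly (a b c : ℝ) (ha : 0 ≤ a) (hb : 0 ≤ b) (hc : 0 ≤ c)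
    (hab : 0 < a + b) (hac : 0 < a + c) (hcb : 0 < c + b) :
    (a - b)^2 / (a + b) ≤ (a - c)^2 / (a + c) + (c - b)^2 / (c + b)
      + 4 * |a - c| * |c - b| / (a + b + 2*c) := by
  have habc : 0 < a + b + 2*c := by linarith
  rw [div_add_div _ _ (ne_of_gt hac) (ne_of_gt hcb),
      div_add_div _ _ (ne_of_gt (mul_pos hac hcb)) (ne_of_gt habc),
      div_le_div_iff₀ hab (mul_pos (mul_pos hac hcb) habc)]
  rcases abs_cases (a - c) with ⟨h1, h1'⟩ | ⟨h1, h1'⟩ <;>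
    rcases abs_cases (c - b) with ⟨h2, h2'⟩ | ⟨h2, h2'⟩ <;> rw [h1, h2]
  · nlinarith [mul_nonneg (mul_nonneg (mul_nonneg hc h1') h2') (sq_nonneg (a-b))]
  · have hp : 0 ≤ a - c := h1'
    have hq : 0 ≤ b - c := by linarith
    nlinarith [mul_nonneg (mul_nonneg hp hq)
      (by positivity : (0:ℝ) ≤ 32*c^3 + 32*(b-c)*c^2 + 7*(b-c)^2*c + 32*(a-c)*c^2
        + 26*(a-c)*(b-c)*c + 4*(a-c)*(b-c)^2 + 7*(a-c)^2*c + 4*(a-c)^2*(b-c))]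
  · have hp : 0 ≤ c - a := by linarith
    have hq : 0 ≤ c - b := h2'
    nlinarith [mul_nonneg (mul_nonneg hp hq)
      (by positivity : (0:ℝ) ≤ 4*b*c^2 + 3*b^2*c + 4*a*c^2 + 10*a*b*c + 4*a*b^2 + 3*a^2*c + 4*a^2*b)]
  · nlinarith [mul_nonneg (mul_nonneg (mul_nonneg hc (by linarith : (0:ℝ) ≤ c - a))
      (by linarith : (0:ℝ) ≤ b - c)) (sq_nonneg (a-b))]

/-- Pointwise triangle inequality for `√(2(a-b)²/(a+b))`. -/
private lemma tri_pt (a b c : ℝ) (ha : 0 ≤ a) (hb : 0 ≤ b) (hc : 0 ≤ c) :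
    Real.sqrt (2*(a-b)^2/(a+b)) ≤
      Real.sqrt (2*(a-c)^2/(a+c)) + Real.sqrt (2*(c-b)^2/(c+b)) := by
  rcases eq_or_lt_of_le (add_nonneg ha hb) with hab | hab
  · rw [← hab, div_zero, Real.sqrt_zero]
    positivity
  rcases eq_or_lt_of_le (add_nonneg ha hc) with hac | hac
  · have ha0 : a = 0 := by linarith
    have hc0 : c = 0 := by linarith
    subst ha0; subst hc0
    norm_num
  rcases eq_or_lt_of_le (add_nonneg hc hb) with hcb | hcb
  · have hc0 : c = 0 := by linarith
    have hb0 : b = 0 := by linarith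
    subst hc0; subst hb0
    norm_num
  set u := 2*(a-c)^2/(a+c) with hu_def
  set v := 2*(c-b)^2/(c+b) with hv_def
  have hu : 0 ≤ u := by positivity
  have hv : 0 ≤ v := by positivity
  have habc : 0 < a + b + 2*c := by linarith
  -- cross-term bound
  have hcross : 8 * |a - c| * |c - b| / (a + b + 2*c) ≤ 2 * (Real.sqrt u * Real.sqrt v) := by
    rw [← Real.sqrt_mul hu]
    have h8 : 8 * |a - c| * |c - b| / (a + b + 2*c)
        = 2 * (4 * |a - c| * |c - b| / (a + b + 2*c)) := by ring
    rw [h8]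
    have hx : (0:ℝ) ≤ 4 * |a - c| * |c - b| / (a + b + 2*c) := by positivity
    have hkey : (4 * |a - c| * |c - b| / (a + b + 2*c))^2 ≤ u * v := by
      rw [hu_def, hv_def, div_pow, mul_pow, mul_pow, sq_abs, sq_abs]
      rw [div_mul_div_comm]
      rw [div_le_div_iff₀ (by positivity) (by positivity)]
      nlinarith [mul_nonneg (mul_nonneg (sq_nonneg (a-c)) (sq_nonneg (c-b)))
        (sq_nonneg ((a+c) - (c+b))), sq_nonneg (a-c), sq_nonneg (c-b)]
    have := (Real.le_sqrt hx (le_trans (by positivity) hkey)).mpr hkey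
    linarith
  have hmain : 2*(a-b)^2/(a+b) ≤ (Real.sqrt u + Real.sqrt v)^2 := by
    have hkp := key_poly a b c ha hb hc hab hac hcb
    have hsq : (Real.sqrt u + Real.sqrt v)^2
        = u + v + 2 * (Real.sqrt u * Real.sqrt v) := by
      rw [add_sq, Real.sq_sqrt hu, Real.sq_sqrt hv]; ring
    rw [hsq, hu_def, hv_def]
    have h2 : 2*(a-b)^2/(a+b) = 2 * ((a-b)^2/(a+b)) := by ring
    have h3 : 2*(a-c)^2/(a+c) = 2 * ((a-c)^2/(a+c)) := by ring
    have h4 : 2*(c-b)^2/(c+b) = 2 * ((c-b)^2/(c+b)) := by ring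
    have h5 : 8 * |a - c| * |c - b| / (a + b + 2*c)
        = 2 * (4 * |a - c| * |c - b| / (a + b + 2*c)) := by ring
    nlinarith [hcross]
  calc Real.sqrt (2*(a-b)^2/(a+b)) ≤ Real.sqrt ((Real.sqrt u + Real.sqrt v)^2) :=
        Real.sqrt_le_sqrt hmain
    _ = Real.sqrt u + Real.sqrt v :=
        Real.sqrt_sq (by positivity)

private lemma nn2 (x y : ℝ) (hx : 0 ≤ x) (hy : 0 ≤ y) :
    (0:ℝ) ≤ 2 * (x - y) ^ 2 / (x + y) :=
  div_nonneg (by positivity) (by linarith)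

private lemma summand_summable {T : Type*} (f g : T → ℝ) (hf : ∀ t, 0 ≤ f t)
    (hg : ∀ t, 0 ≤ g t) (hsf : Summable f) (hsg : Summable g) :
    Summable (fun t => 2 * (f t - g t) ^ 2 / (f t + g t)) := by
  refine Summable.of_nonneg_of_le (fun t => nn2 _ _ (hf t) (hg t)) ?_
    ((hsf.add hsg).mul_left 2)
  intro t
  rcases eq_or_lt_of_le (add_nonneg (hf t) (hg t)) with h | h
  · rw [← h, div_zero]; positivity
  · rw [div_le_iff₀ h]
    nlinarith [sq_nonneg (f t - g t), sq_nonneg (f t + g t), mul_nonneg (hf t) (hg t)]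

/-- On a countable set `T`, `(τ, m) ↦ √(S²(τ,m))` is a metric on the set
of probability mass functions on `T`: nonnegative, zero iff `τ = m`, symmetric, and
satisfying the triangle inequality. -/
theorem symmChiSq_sqrt_is_metric {T : Type*} [Countable T] :
    ∀ τ m : T → ℝ,
      (∀ t, 0 ≤ τ t) → (∑' t, τ t) = 1 →
      (∀ t, 0 ≤ m t) → (∑' t, m t) = 1 →
      0 ≤ Real.sqrt (symmChiSq τ m) ∧
      (Real.sqrt (symmChiSq τ m) = 0 ↔ τ = m) ∧
      Real.sqrt (symmChiSq τ m) = Real.sqrt (symmChiSq m τ) ∧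
      (∀ g : T → ℝ, (∀ t, 0 ≤ g t) → (∑' t, g t) = 1 →
        Real.sqrt (symmChiSq τ m) ≤
          Real.sqrt (symmChiSq τ g) + Real.sqrt (symmChiSq g m)) := by
  intro τ m hτ0 hτ1 hm0 hm1
  have hτs : Summable τ := by
    by_contra h
    rw [tsum_eq_zero_of_not_summable h] at hτ1
    norm_num at hτ1
  have hms : Summable m := by
    by_contra h
    rw [tsum_eq_zero_of_not_summable h] at hm1
    norm_num at hm1
  have hwsum := summand_summable τ m hτ0 hm0 hτs hms
  refine ⟨Real.sqrt_nonneg _, ⟨?_, ?_⟩, ?_, ?_⟩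
  · -- sqrt = 0 → τ = m
    intro h
    have hS0 : 0 ≤ symmChiSq τ m := tsum_nonneg (fun t => nn2 _ _ (hτ0 t) (hm0 t))
    have hS : symmChiSq τ m = 0 := (Real.sqrt_eq_zero hS0).mp h
    funext t
    have hle : 2 * (τ t - m t) ^ 2 / (τ t + m t) ≤ symmChiSq τ m :=
      Summable.le_tsum hwsum t (fun j _ => nn2 _ _ (hτ0 j) (hm0 j))
    have hterm0 : 2 * (τ t - m t) ^ 2 / (τ t + m t) = 0 := by
      have : (0:ℝ) ≤ 2 * (τ t - m t) ^ 2 / (τ t + m t) := nn2 _ _ (hτ0 t) (hm0 t)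
      linarith [hS ▸ hle]
    rcases eq_or_lt_of_le (add_nonneg (hτ0 t) (hm0 t)) with h0 | h0
    · have := hτ0 t; have := hm0 t; linarith
    · rcases div_eq_zero_iff.mp hterm0 with h' | h'
      · nlinarith [sq_nonneg (τ t - m t)]
      · linarith
  · -- τ = m → sqrt = 0
    intro h
    subst h
    simp [symmChiSq]
  · -- symmetry
    have : symmChiSq τ m = symmChiSq m τ := by
      unfold symmChiSq
      apply tsum_congr
      intro t
      rw [show (τ t - m t)^2 = (m t - τ t)^2 by ring, add_comm]
    rw [this]
  · -- triangle inequality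
    intro g hg0 hg1
    have hgs : Summable g := by
      by_contra h
      rw [tsum_eq_zero_of_not_summable h] at hg1
      norm_num at hg1
    set u : T → ℝ := fun t => 2 * (τ t - g t) ^ 2 / (τ t + g t) with hu_def
    set v : T → ℝ := fun t => 2 * (g t - m t) ^ 2 / (g t + m t) with hv_def
    set w : T → ℝ := fun t => 2 * (τ t - m t) ^ 2 / (τ t + m t) with hw_def
    have hu0 : ∀ t, 0 ≤ u t := fun t => nn2 _ _ (hτ0 t) (hg0 t)
    have hv0 : ∀ t, 0 ≤ v t := fun t => nn2 _ _ (hg0 t) (hm0 t)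
    have hus : Summable u := summand_summable τ g hτ0 hg0 hτs hgs
    have hvs : Summable v := summand_summable g m hg0 hm0 hgs hms
    -- pointwise
    have hpt : ∀ t, w t ≤ u t + v t + 2 * Real.sqrt (u t * v t) := by
      intro t
      have h3 := tri_pt (τ t) (m t) (g t) (hτ0 t) (hm0 t) (hg0 t)
      have hw0 : (0:ℝ) ≤ w t := nn2 _ _ (hτ0 t) (hm0 t)
      have heq : w t = Real.sqrt (w t) ^ 2 := (Real.sq_sqrt hw0).symm
      have hle2 : Real.sqrt (w t) ^ 2 ≤ (Real.sqrt (u t) + Real.sqrt (v t)) ^ 2 := by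
        apply pow_le_pow_left₀ (Real.sqrt_nonneg _) _ 2
        exact h3
      rw [heq]
      calc Real.sqrt (w t) ^ 2 ≤ (Real.sqrt (u t) + Real.sqrt (v t)) ^ 2 := hle2
        _ = u t + v t + 2 * (Real.sqrt (u t) * Real.sqrt (v t)) := by
            rw [add_sq, Real.sq_sqrt (hu0 t), Real.sq_sqrt (hv0 t)]; ring
        _ = u t + v t + 2 * Real.sqrt (u t * v t) := by
            rw [Real.sqrt_mul (hu0 t)]
    -- summability of sqrt (u*v)
    have hsuv : Summable (fun t => Real.sqrt (u t * v t)) := by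
      refine Summable.of_nonneg_of_le (fun t => Real.sqrt_nonneg _) ?_
        ((hus.add hvs).div_const 2)
      intro t
      rw [Real.sqrt_mul (hu0 t)]
      nlinarith [sq_nonneg (Real.sqrt (u t) - Real.sqrt (v t)),
        Real.sq_sqrt (hu0 t), Real.sq_sqrt (hv0 t)]
    -- Cauchy-Schwarz for tsums
    have hcs : (∑' t, Real.sqrt (u t * v t))
        ≤ Real.sqrt (∑' t, u t) * Real.sqrt (∑' t, v t) := by
      apply Summable.tsum_le_of_sum_le hsuv
      intro s
      have hCS := Finset.sum_mul_sq_le_sq_mul_sq s (fun t => Real.sqrt (u t))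
        (fun t => Real.sqrt (v t))
      have h1 : ∑ t ∈ s, Real.sqrt (u t) ^ 2 = ∑ t ∈ s, u t :=
        Finset.sum_congr rfl (fun t _ => Real.sq_sqrt (hu0 t))
      have h2 : ∑ t ∈ s, Real.sqrt (v t) ^ 2 = ∑ t ∈ s, v t :=
        Finset.sum_congr rfl (fun t _ => Real.sq_sqrt (hv0 t))
      have h3 : ∑ t ∈ s, Real.sqrt (u t) * Real.sqrt (v t)
          = ∑ t ∈ s, Real.sqrt (u t * v t) :=
        Finset.sum_congr rfl (fun t _ => (Real.sqrt_mul (hu0 t) _).symm)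
      rw [h1, h2, h3] at hCS
      have h4 : ∑ t ∈ s, u t ≤ ∑' t, u t := Summable.sum_le_tsum s (fun t _ => hu0 t) hus
      have h5 : ∑ t ∈ s, v t ≤ ∑' t, v t := Summable.sum_le_tsum s (fun t _ => hv0 t) hvs
      have h6 : (∑ t ∈ s, Real.sqrt (u t * v t)) ^ 2 ≤ (∑' t, u t) * (∑' t, v t) := by
        calc (∑ t ∈ s, Real.sqrt (u t * v t)) ^ 2 ≤ (∑ t ∈ s, u t) * ∑ t ∈ s, v t := hCS
          _ ≤ (∑' t, u t) * (∑' t, v t) := by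
              apply mul_le_mul h4 h5 (Finset.sum_nonneg (fun t _ => hv0 t))
                (le_trans (Finset.sum_nonneg (fun t _ => hu0 t)) h4)
      have h7 : (0:ℝ) ≤ ∑ t ∈ s, Real.sqrt (u t * v t) :=
        Finset.sum_nonneg (fun t _ => Real.sqrt_nonneg _)
      calc ∑ t ∈ s, Real.sqrt (u t * v t)
          ≤ Real.sqrt ((∑' t, u t) * (∑' t, v t)) := by
            rw [Real.le_sqrt h7 (le_trans (sq_nonneg _) h6)]
            exact h6
        _ = Real.sqrt (∑' t, u t) * Real.sqrt (∑' t, v t) :=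
            Real.sqrt_mul (tsum_nonneg hu0) _
    -- combine
    have hsum : symmChiSq τ m ≤ (Real.sqrt (symmChiSq τ g) + Real.sqrt (symmChiSq g m))^2 := by
      have hU : symmChiSq τ g = ∑' t, u t := rfl
      have hV : symmChiSq g m = ∑' t, v t := rfl
      have hW : symmChiSq τ m = ∑' t, w t := rfl
      rw [hU, hV, hW]
      have hrhs : Summable (fun t => u t + v t + 2 * Real.sqrt (u t * v t)) :=
        (hus.add hvs).add (hsuv.mul_left 2)
      have step1 : ∑' t, w t ≤ ∑' t, (u t + v t + 2 * Real.sqrt (u t * v t)) :=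
        Summable.tsum_le_tsum hpt hwsum hrhs
      have step2 : ∑' t, (u t + v t + 2 * Real.sqrt (u t * v t))
          = (∑' t, u t) + (∑' t, v t) + 2 * ∑' t, Real.sqrt (u t * v t) := by
        rw [Summable.tsum_add (hus.add hvs) (hsuv.mul_left 2), Summable.tsum_add hus hvs,
          tsum_mul_left]
      have hexp : (Real.sqrt (∑' t, u t) + Real.sqrt (∑' t, v t))^2
          = (∑' t, u t) + (∑' t, v t)
            + 2 * (Real.sqrt (∑' t, u t) * Real.sqrt (∑' t, v t)) := by
        rw [add_sq, Real.sq_sqrt (tsum_nonneg hu0), Real.sq_sqrt (tsum_nonneg hv0)]; ring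
      rw [hexp]
      linarith [step1, step2 ▸ step1, hcs]
    calc Real.sqrt (symmChiSq τ m)
        ≤ Real.sqrt ((Real.sqrt (symmChiSq τ g) + Real.sqrt (symmChiSq g m))^2) :=
          Real.sqrt_le_sqrt hsum
      _ = Real.sqrt (symmChiSq τ g) + Real.sqrt (symmChiSq g m) :=
          Real.sqrt_sq (by positivity)
end

section
/- Let T be a countable set and let f and g be probability mass functions on T. With φ_opt(t) = g(t)/(f(t) + g(t)) (interpreted as 0 when f(t) + g(t) = 0), the minimum Bayes risk satisfies (1/2)Σ_t (1 − φ_opt(t))² g(t) + (1/2)Σ_t φ_opt(t)² f(t) = (1/2)Σ_t f(t)g(t)/(f(t) + g(t)) = (1/4)(1 − S²(f,g)/4), where S²(f,g) = Σ_t (f(t) − g(t))²/((1/2)f(t) + (1/2)g(t)) is the symmetric chi-squared distance. -/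
/-- For probability mass functions `f`, `g` on a countable set `T` and
`φ_opt t = g t / (f t + g t)` (interpreted as `0` when `f t + g t = 0`), the minimum
Bayes risk equals `(1/2)Σ_t f t g t/(f t + g t)`, which equals `(1/4)(1 - S²(f,g)/4)`
with `S²(f,g) = Σ_t (f t - g t)²/((1/2) f t + (1/2) g t)`. -/
theorem minimum_bayes_risk_eq_symmChiSq_expression
    {T : Type*} [Countable T] (f g : T → ℝ)
    (hf0 : ∀ t, 0 ≤ f t) (hf1 : (∑' t, f t) = 1)
    (hg0 : ∀ t, 0 ≤ g t) (hg1 : (∑' t, g t) = 1)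
    (φopt : T → ℝ) (hφopt : ∀ t, φopt t = g t / (f t + g t)) :
    (1 / 2) * (∑' t, (1 - φopt t) ^ 2 * g t) +
        (1 / 2) * (∑' t, (φopt t) ^ 2 * f t) =
      (1 / 2) * (∑' t, f t * g t / (f t + g t)) ∧
    (1 / 2) * (∑' t, f t * g t / (f t + g t)) =
      (1 / 4) * (1 -
        (∑' t, (f t - g t) ^ 2 / ((1 / 2) * f t + (1 / 2) * g t)) / 4) := by
  have sf : Summable f := by
    by_contra h; rw [tsum_eq_zero_of_not_summable h] at hf1; norm_num at hf1
  have sg : Summable g := by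
    by_contra h; rw [tsum_eq_zero_of_not_summable h] at hg1; norm_num at hg1
  set a : T → ℝ := fun t => (1 - φopt t) ^ 2 * g t with ha
  set b : T → ℝ := fun t => (φopt t) ^ 2 * f t with hb
  set c : T → ℝ := fun t => f t * g t / (f t + g t) with hc
  set d : T → ℝ := fun t => (f t - g t) ^ 2 / ((1 / 2) * f t + (1 / 2) * g t) with hd
  have hzero : ∀ t, f t + g t = 0 → f t = 0 ∧ g t = 0 := by
    intro t ht
    constructor <;> nlinarith [hf0 t, hg0 t]
  have hab : ∀ t, a t + b t = c t := by
    intro t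
    simp only [ha, hb, hc, hφopt t]
    rcases eq_or_ne (f t + g t) 0 with ht | ht
    · obtain ⟨h1, h2⟩ := hzero t ht
      simp [h1, h2]
    · field_simp
      ring
  have hc0 : ∀ t, 0 ≤ c t := fun t =>
    div_nonneg (mul_nonneg (hf0 t) (hg0 t)) (by linarith [hf0 t, hg0 t])
  have hcle : ∀ t, c t ≤ f t := by
    intro t
    rcases eq_or_ne (f t + g t) 0 with ht | ht
    · obtain ⟨h1, h2⟩ := hzero t ht; simp [hc, h1, h2]
    · have hpos : 0 < f t + g t := lt_of_le_of_ne (by linarith [hf0 t, hg0 t]) (Ne.symm ht)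
      rw [hc, div_le_iff₀ hpos]
      nlinarith [hf0 t, hg0 t]
  have sc : Summable c := Summable.of_nonneg_of_le hc0 hcle sf
  have ha0 : ∀ t, 0 ≤ a t := fun t => mul_nonneg (sq_nonneg _) (hg0 t)
  have hb0 : ∀ t, 0 ≤ b t := fun t => mul_nonneg (sq_nonneg _) (hf0 t)
  have sa : Summable a :=
    Summable.of_nonneg_of_le ha0 (fun t => by rw [← hab t]; linarith [hb0 t]) sc
  have sb : Summable b :=
    Summable.of_nonneg_of_le hb0 (fun t => by rw [← hab t]; linarith [ha0 t]) sc
  have hd0 : ∀ t, 0 ≤ d t := fun t =>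
    div_nonneg (sq_nonneg _) (by linarith [hf0 t, hg0 t])
  have hdle : ∀ t, d t ≤ 2 * (f t + g t) := by
    intro t
    rcases eq_or_ne (f t + g t) 0 with ht | ht
    · obtain ⟨h1, h2⟩ := hzero t ht; simp [hd, h1, h2]
    · have hpos : 0 < f t + g t := lt_of_le_of_ne (by linarith [hf0 t, hg0 t]) (Ne.symm ht)
      rw [hd, div_le_iff₀ (by linarith)]
      nlinarith [hf0 t, hg0 t, sq_nonneg (f t - g t)]
  have sfg : Summable (fun t => f t + g t) := sf.add sg
  have sd : Summable d :=
    Summable.of_nonneg_of_le hd0 hdle (sfg.mul_left 2)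
  have hcd : ∀ t, c t = (1 / 4) * (f t + g t) - (1 / 8) * d t := by
    intro t
    rcases eq_or_ne (f t + g t) 0 with ht | ht
    · obtain ⟨h1, h2⟩ := hzero t ht; simp [hc, hd, h1, h2]
    · have h2 : (1 / 2) * f t + (1 / 2) * g t ≠ 0 := by
        intro h; apply ht; linarith
      rw [hc, hd]
      field_simp
      ring
  have key1 : (∑' t, a t) + (∑' t, b t) = ∑' t, c t := by
    rw [← Summable.tsum_add sa sb]; exact tsum_congr hab
  have key2 : (∑' t, c t) = 1 / 2 - (1 / 8) * (∑' t, d t) := by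
    calc (∑' t, c t) = ∑' t, ((1 / 4) * (f t + g t) - (1 / 8) * d t) := tsum_congr hcd
      _ = (∑' t, (1 / 4) * (f t + g t)) - ∑' t, (1 / 8) * d t :=
        Summable.tsum_sub ((sfg).mul_left _) (sd.mul_left _)
      _ = (1 / 4) * (∑' t, (f t + g t)) - (1 / 8) * (∑' t, d t) := by
        rw [tsum_mul_left, tsum_mul_left]
      _ = 1 / 2 - (1 / 8) * (∑' t, d t) := by
        rw [Summable.tsum_add sf sg, hf1, hg1]; ring
  constructor
  · rw [show (1 / 2 : ℝ) * (∑' t, a t) + (1 / 2) * (∑' t, b t)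
        = (1 / 2) * ((∑' t, a t) + (∑' t, b t)) by ring, key1]
  · rw [key2]; ring
end

section
/- Let F and G be Borel probability measures on ℝ, and let k_h be a probability density on ℝ (a nonnegative measurable function integrating to 1). Define the smoothed densities f*(y) = ∫ k_h(y − x) dF(x) and g*(y) = ∫ k_h(y − x) dG(x), and assume g*(y) > 0 for all y. Define K(s,t) = ∫ k_h(y − s)k_h(y − t)/g*(y) dy, and assume ∬ K(s,t) d(F − G)(s) d(F − G)(t) is finite (all integrands absolutely integrable with respect to the relevant product measures). Then the kernel-smoothed Pearson chi-squared distance P*²(F,G) = ∫ (f*(y) − g*(y))²/g*(y) dy is an exactly quadratic distance: P*²(F,G) = ∬ K(s,t) d(F − G)(s) d(F − G)(t). -/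
open MeasureTheory

namespace SmoothedAux

/-- smoothed density in lintegral form is measurable -/
lemma L_meas (μ : Measure ℝ) [SFinite μ] {k : ℝ → ℝ} (hk : Measurable k) :
    Measurable fun y => ∫⁻ x, ENNReal.ofReal (k (y - x)) ∂μ :=
  Measurable.lintegral_prod_right
    (f := fun y x => ENNReal.ofReal (k (y - x)))
    (ENNReal.measurable_ofReal.comp (hk.comp (measurable_fst.sub measurable_snd)))

lemma k_int {k : ℝ → ℝ} (hk1 : (∫ x, k x) = 1) : Integrable k := by
  by_contra h
  rw [integral_undef h] at hk1; norm_num at hk1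

lemma k_lint {k : ℝ → ℝ} (hk0 : ∀ x, 0 ≤ k x) (hk1 : (∫ x, k x) = 1) :
    (∫⁻ y, ENNReal.ofReal (k y)) = 1 := by
  rw [← ofReal_integral_eq_lintegral_ofReal (k_int hk1) (Filter.Eventually.of_forall hk0), hk1,
    ENNReal.ofReal_one]

/-- the unconditional identity `∫ x, k (y - x) ∂μ = (∫⁻ x, ofReal (k (y-x)) ∂μ).toReal` -/
lemma integral_eq_toReal (μ : Measure ℝ) {k : ℝ → ℝ} (hk : Measurable k) (hk0 : ∀ x, 0 ≤ k x)
    (y : ℝ) :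
    (∫ x, k (y - x) ∂μ) = (∫⁻ x, ENNReal.ofReal (k (y - x)) ∂μ).toReal := by
  rw [integral_eq_lintegral_of_nonneg_ae (Filter.Eventually.of_forall fun x => hk0 _)
    (Measurable.aestronglyMeasurable (by fun_prop))]

lemma lint_L_eq_one (μ : Measure ℝ) [IsProbabilityMeasure μ] {k : ℝ → ℝ} (hk : Measurable k)
    (hk0 : ∀ x, 0 ≤ k x) (hk1 : (∫ x, k x) = 1) :
    (∫⁻ y, ∫⁻ x, ENNReal.ofReal (k (y - x)) ∂μ) = 1 := by
  rw [lintegral_lintegral_swap (μ := volume) (ν := μ)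
    (f := fun y x => ENNReal.ofReal (k (y - x)))
    (Measurable.aemeasurable (by fun_prop))]
  have : ∀ x : ℝ, (∫⁻ y, ENNReal.ofReal (k (y - x))) = 1 := fun x => by
    rw [lintegral_sub_right_eq_self (fun y => ENNReal.ofReal (k y)) x]
    exact k_lint hk0 hk1
  simp only [this, lintegral_one, measure_univ, mul_one]

open ENNReal in
lemma key (μ ν : Measure ℝ) [IsProbabilityMeasure μ] [IsProbabilityMeasure ν]
    {k : ℝ → ℝ} (hk : Measurable k) (hk0 : ∀ x, 0 ≤ k x) (hk1 : (∫ x, k x) = 1)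
    {gstar : ℝ → ℝ} (hg_meas : Measurable gstar) (hgpos : ∀ y, 0 < gstar y)
    {K : ℝ → ℝ → ℝ} (hK : ∀ s t, K s t = ∫ y, k (y - s) * k (y - t) / gstar y)
    (hint : Integrable (fun p : ℝ × ℝ => K p.1 p.2) (μ.prod ν))
    {u v : ℝ → ℝ} (hu : ∀ y, u y = ∫ x, k (y - x) ∂μ) (hv : ∀ y, v y = ∫ x, k (y - x) ∂ν)
    (hfin : (∫⁻ y, ENNReal.ofReal (u y * v y / gstar y)) ≠ ⊤) :
    (∫ s, (∫ t, K s t ∂ν) ∂μ) = ∫ y, u y * v y / gstar y := by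
  set Lu : ℝ → ℝ≥0∞ := fun y => ∫⁻ x, ENNReal.ofReal (k (y - x)) ∂μ with hLu
  set Lv : ℝ → ℝ≥0∞ := fun y => ∫⁻ x, ENNReal.ofReal (k (y - x)) ∂ν with hLv
  have hu0 : ∀ y, 0 ≤ u y := fun y => (hu y) ▸ integral_nonneg fun x => hk0 _
  have hv0 : ∀ y, 0 ≤ v y := fun y => (hv y) ▸ integral_nonneg fun x => hk0 _
  have huL : ∀ y, u y = (Lu y).toReal := fun y => (hu y).trans (integral_eq_toReal μ hk hk0 y)
  have hvL : ∀ y, v y = (Lv y).toReal := fun y => (hv y).trans (integral_eq_toReal ν hk hk0 y)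
  have hu_meas : Measurable u := by
    have : u = fun y => (Lu y).toReal := funext huL
    rw [this]; exact ENNReal.measurable_toReal.comp (L_meas μ hk)
  have hv_meas : Measurable v := by
    have : v = fun y => (Lv y).toReal := funext hvL
    rw [this]; exact ENNReal.measurable_toReal.comp (L_meas ν hk)
  have hLu_fin : ∀ᵐ y, Lu y ≠ ⊤ := by
    have h1 : (∫⁻ y, Lu y) ≠ ⊤ := by
      rw [hLu, lint_L_eq_one μ hk hk0 hk1]; exact ENNReal.one_ne_top
    exact (ae_lt_top (L_meas μ hk) h1).mono fun y hy => hy.ne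
  have hLv_fin : ∀ᵐ y, Lv y ≠ ⊤ := by
    have h1 : (∫⁻ y, Lv y) ≠ ⊤ := by
      rw [hLv, lint_L_eq_one ν hk hk0 hk1]; exact ENNReal.one_ne_top
    exact (ae_lt_top (L_meas ν hk) h1).mono fun y hy => hy.ne
  set N : ℝ × ℝ → ℝ≥0∞ := fun p =>
    ∫⁻ y, ENNReal.ofReal (k (y - p.1)) * ENNReal.ofReal (k (y - p.2)) /
      ENNReal.ofReal (gstar y) with hN
  have hN_meas : Measurable N := by
    apply Measurable.lintegral_prod_right' (f := fun (q : (ℝ × ℝ) × ℝ) =>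
      ENNReal.ofReal (k (q.2 - q.1.1)) * ENNReal.ofReal (k (q.2 - q.1.2)) /
        ENNReal.ofReal (gstar q.2))
    fun_prop
  have hKN : ∀ s t, K s t = (N (s, t)).toReal := by
    intro s t
    rw [hK s t, integral_eq_lintegral_of_nonneg_ae
      (Filter.Eventually.of_forall fun y => div_nonneg (mul_nonneg (hk0 _) (hk0 _)) (hgpos y).le)
      (Measurable.aestronglyMeasurable (by fun_prop))]
    congr 1
    exact lintegral_congr fun y => by
      rw [ENNReal.ofReal_div_of_pos (hgpos y), ENNReal.ofReal_mul (hk0 _)]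
  -- pointwise a.e. identity for the factorized integrand
  have hae : ∀ᵐ y, Lu y * Lv y / ENNReal.ofReal (gstar y) =
      ENNReal.ofReal (u y * v y / gstar y) := by
    filter_upwards [hLu_fin, hLv_fin] with y hyu hyv
    rw [ENNReal.ofReal_div_of_pos (hgpos y), ENNReal.ofReal_mul (hu0 y),
      huL y, hvL y, ENNReal.ofReal_toReal hyu, ENNReal.ofReal_toReal hyv]
  -- Tonelli for N
  have hNswap : (∫⁻ p, N p ∂(μ.prod ν)) = ∫⁻ y, Lu y * Lv y / ENNReal.ofReal (gstar y) := by
    rw [hN, lintegral_lintegral_swap (μ := μ.prod ν) (ν := volume)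
      (f := fun (p : ℝ × ℝ) y => ENNReal.ofReal (k (y - p.1)) * ENNReal.ofReal (k (y - p.2)) /
        ENNReal.ofReal (gstar y)) (Measurable.aemeasurable (by fun_prop))]
    refine lintegral_congr fun y => ?_
    simp_rw [div_eq_mul_inv]
    rw [lintegral_mul_const _ (by fun_prop)]
    congr 1
    exact lintegral_prod_mul (f := fun s => ENNReal.ofReal (k (y - s)))
      (g := fun t => ENNReal.ofReal (k (y - t))) (by fun_prop) (by fun_prop)
  have hN_lint : (∫⁻ p, N p ∂(μ.prod ν)) = ∫⁻ y, ENNReal.ofReal (u y * v y / gstar y) :=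
    hNswap.trans (lintegral_congr_ae hae)
  have hN_ae : ∀ᵐ p ∂(μ.prod ν), N p ≠ ⊤ :=
    (ae_lt_top hN_meas (by rw [hN_lint]; exact hfin)).mono fun p hp => hp.ne
  -- main chain
  rw [show (∫ s, (∫ t, K s t ∂ν) ∂μ) = ∫ p, K p.1 p.2 ∂(μ.prod ν) from
    integral_integral (f := fun s t => K s t) hint]
  rw [integral_eq_lintegral_of_nonneg_ae
    (Filter.Eventually.of_forall fun p => (hKN p.1 p.2) ▸ ENNReal.toReal_nonneg)
    (by
      have hfe : (fun p : ℝ × ℝ => K p.1 p.2) = fun p => (N p).toReal :=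
        funext fun p => hKN p.1 p.2
      rw [hfe]
      exact (ENNReal.measurable_toReal.comp hN_meas).aestronglyMeasurable)]
  rw [integral_eq_lintegral_of_nonneg_ae
    (Filter.Eventually.of_forall fun y => div_nonneg (mul_nonneg (hu0 y) (hv0 y)) (hgpos y).le)
    (((hu_meas.mul hv_meas).div hg_meas).aestronglyMeasurable)]
  congr 1
  rw [← hN_lint]
  refine lintegral_congr_ae (hN_ae.mono fun p hp => ?_)
  show ENNReal.ofReal (K p.1 p.2) = N p
  rw [hKN p.1 p.2, ENNReal.ofReal_toReal hp]

lemma smoothed (μ : Measure ℝ) [IsProbabilityMeasure μ] {k : ℝ → ℝ} (hk : Measurable k)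
    (hk0 : ∀ x, 0 ≤ k x) (hk1 : (∫ x, k x) = 1) {w : ℝ → ℝ}
    (hw : ∀ y, w y = ∫ x, k (y - x) ∂μ) :
    Integrable w ∧ (∫ y, w y) = 1 := by
  set L : ℝ → ENNReal := fun y => ∫⁻ x, ENNReal.ofReal (k (y - x)) ∂μ with hL
  have hw0 : ∀ y, 0 ≤ w y := fun y => (hw y) ▸ integral_nonneg fun x => hk0 _
  have hwL : ∀ y, w y = (L y).toReal := fun y => (hw y).trans (integral_eq_toReal μ hk hk0 y)
  have hw_meas : Measurable w := by
    have : w = fun y => (L y).toReal := funext hwL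
    rw [this]; exact ENNReal.measurable_toReal.comp (L_meas μ hk)
  have hfin : ∀ᵐ y, L y ≠ ⊤ := by
    have h1 : (∫⁻ y, L y) ≠ ⊤ := by
      rw [hL, lint_L_eq_one μ hk hk0 hk1]; exact ENNReal.one_ne_top
    exact (ae_lt_top (L_meas μ hk) h1).mono fun y hy => hy.ne
  have hofReal : ∀ᵐ y, ENNReal.ofReal (w y) = L y := by
    filter_upwards [hfin] with y hy
    rw [hwL y, ENNReal.ofReal_toReal hy]
  have hlint : (∫⁻ y, ENNReal.ofReal (w y)) = 1 :=
    (lintegral_congr_ae hofReal).trans (lint_L_eq_one μ hk hk0 hk1)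
  constructor
  · refine ⟨hw_meas.aestronglyMeasurable, ?_⟩
    rw [hasFiniteIntegral_iff_ofReal (Filter.Eventually.of_forall hw0), hlint]
    exact ENNReal.one_lt_top
  · rw [integral_eq_lintegral_of_nonneg_ae (Filter.Eventually.of_forall hw0)
      hw_meas.aestronglyMeasurable, hlint]
    simp

end SmoothedAux

/-- Let `F`, `G` be Borel probability measures on ℝ and `k` a probability
density on ℝ. With smoothed densities `f* y = ∫ k(y - x) dF(x)`,
`g* y = ∫ k(y - x) dG(x)` (assumed everywhere positive) and kernel
`K(s,t) = ∫ k(y - s) k(y - t)/g*(y) dy`, assuming all the relevant integrands are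
(absolutely) integrable, the kernel-smoothed Pearson chi-squared distance
`P*²(F,G) = ∫ (f* y - g* y)²/g* y dy` is an exactly quadratic distance:
`P*²(F,G) = ∬ K(s,t) d(F - G)(s) d(F - G)(t)`
`= ∬ K dF dF - ∬ K dG dF - ∬ K dF dG + ∬ K dG dG`. -/
theorem smoothed_pearson_is_exactly_quadratic
    (F G : Measure ℝ) [IsProbabilityMeasure F] [IsProbabilityMeasure G]
    (k : ℝ → ℝ) (hk_meas : Measurable k) (hk0 : ∀ x, 0 ≤ k x) (hk1 : (∫ x, k x) = 1)
    (fstar gstar : ℝ → ℝ)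
    (hfstar : ∀ y, fstar y = ∫ x, k (y - x) ∂F)
    (hgstar : ∀ y, gstar y = ∫ x, k (y - x) ∂G)
    (hgpos : ∀ y, 0 < gstar y)
    (K : ℝ → ℝ → ℝ)
    (hK : ∀ s t, K s t = ∫ y, k (y - s) * k (y - t) / gstar y)
    (hFF : Integrable (fun p : ℝ × ℝ => K p.1 p.2) (F.prod F))
    (hFG : Integrable (fun p : ℝ × ℝ => K p.1 p.2) (F.prod G))
    (hGF : Integrable (fun p : ℝ × ℝ => K p.1 p.2) (G.prod F))
    (hGG : Integrable (fun p : ℝ × ℝ => K p.1 p.2) (G.prod G))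
    (hP : Integrable (fun y => (fstar y - gstar y) ^ 2 / gstar y)) :
    (∫ y, (fstar y - gstar y) ^ 2 / gstar y) =
      (∫ s, (∫ t, K s t ∂F) ∂F) - (∫ s, (∫ t, K s t ∂G) ∂F)
        - (∫ s, (∫ t, K s t ∂F) ∂G) + (∫ s, (∫ t, K s t ∂G) ∂G) := by
  obtain ⟨hf_int, hf_one⟩ := SmoothedAux.smoothed F hk_meas hk0 hk1 hfstar
  obtain ⟨hg_int, hg_one⟩ := SmoothedAux.smoothed G hk_meas hk0 hk1 hgstar
  have hg_meas : Measurable gstar := by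
    have : gstar = fun y => (∫⁻ x, ENNReal.ofReal (k (y - x)) ∂G).toReal :=
      funext fun y => (hgstar y).trans (SmoothedAux.integral_eq_toReal G hk_meas hk0 y)
    rw [this]; exact ENNReal.measurable_toReal.comp (SmoothedAux.L_meas G hk_meas)
  -- pointwise simplifications
  have hfg_eq : ∀ y, fstar y * gstar y / gstar y = fstar y := fun y => by
    rw [mul_div_assoc, div_self (hgpos y).ne', mul_one]
  have hgf_eq : ∀ y, gstar y * fstar y / gstar y = fstar y := fun y => by
    rw [mul_comm]; exact hfg_eq y
  have hgg_eq : ∀ y, gstar y * gstar y / gstar y = gstar y := fun y => by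
    rw [mul_div_assoc, div_self (hgpos y).ne', mul_one]
  -- integrability of the ff term
  have hI_ff : Integrable (fun y => fstar y * fstar y / gstar y) := by
    have hbound : Integrable (fun y =>
        2 * ((fstar y - gstar y) ^ 2 / gstar y) + 2 * gstar y) :=
      (hP.const_mul 2).add (hg_int.const_mul 2)
    refine integrable_of_le_of_le (g₁ := fun _ => (0 : ℝ))
      (g₂ := fun y => 2 * ((fstar y - gstar y) ^ 2 / gstar y) + 2 * gstar y)
      ?_ ?_ ?_ (integrable_zero _ _ _) hbound
    · have hf_meas : Measurable fstar := by
        have : fstar = fun y => (∫⁻ x, ENNReal.ofReal (k (y - x)) ∂F).toReal :=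
          funext fun y => (hfstar y).trans (SmoothedAux.integral_eq_toReal F hk_meas hk0 y)
        rw [this]; exact ENNReal.measurable_toReal.comp (SmoothedAux.L_meas F hk_meas)
      exact ((hf_meas.mul hf_meas).div hg_meas).aestronglyMeasurable
    · refine Filter.Eventually.of_forall fun y => ?_
      have h0f : 0 ≤ fstar y := (hfstar y) ▸ integral_nonneg fun x => hk0 _
      exact div_nonneg (mul_nonneg h0f h0f) (hgpos y).le
    · refine Filter.Eventually.of_forall fun y => ?_
      have hg := hgpos y
      have h1 : 2 * ((fstar y - gstar y) ^ 2 / gstar y) + 2 * gstar y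
          - fstar y * fstar y / gstar y = (fstar y - 2 * gstar y) ^ 2 / gstar y := by
        field_simp; ring
      have h2 := div_nonneg (sq_nonneg (fstar y - 2 * gstar y)) hg.le
      linarith
  have hI_fg : Integrable (fun y => fstar y * gstar y / gstar y) :=
    hf_int.congr (Filter.Eventually.of_forall fun y => (hfg_eq y).symm)
  have hI_gf : Integrable (fun y => gstar y * fstar y / gstar y) :=
    hf_int.congr (Filter.Eventually.of_forall fun y => (hgf_eq y).symm)
  have hI_gg : Integrable (fun y => gstar y * gstar y / gstar y) :=
    hg_int.congr (Filter.Eventually.of_forall fun y => (hgg_eq y).symm)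
  -- the four double integrals
  have e1 := SmoothedAux.key F F hk_meas hk0 hk1 hg_meas hgpos hK hFF hfstar hfstar
    hI_ff.lintegral_lt_top.ne
  have e2 := SmoothedAux.key F G hk_meas hk0 hk1 hg_meas hgpos hK hFG hfstar hgstar
    hI_fg.lintegral_lt_top.ne
  have e3 := SmoothedAux.key G F hk_meas hk0 hk1 hg_meas hgpos hK hGF hgstar hfstar
    hI_gf.lintegral_lt_top.ne
  have e4 := SmoothedAux.key G G hk_meas hk0 hk1 hg_meas hgpos hK hGG hgstar hgstar
    hI_gg.lintegral_lt_top.ne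
  have v2 : (∫ y, fstar y * gstar y / gstar y) = 1 := by
    rw [integral_congr_ae (Filter.Eventually.of_forall hfg_eq), hf_one]
  have v3 : (∫ y, gstar y * fstar y / gstar y) = 1 := by
    rw [integral_congr_ae (Filter.Eventually.of_forall hgf_eq), hf_one]
  have v4 : (∫ y, gstar y * gstar y / gstar y) = 1 := by
    rw [integral_congr_ae (Filter.Eventually.of_forall hgg_eq), hg_one]
  -- the left-hand side
  have lhs_eq : (∫ y, (fstar y - gstar y) ^ 2 / gstar y)
      = (∫ y, fstar y * fstar y / gstar y) - 1 := by
    have hpt : ∀ y, (fstar y - gstar y) ^ 2 / gstar y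
        = fstar y * fstar y / gstar y - (2 * fstar y - gstar y) := by
      intro y
      have hg := (hgpos y).ne'
      field_simp
      ring
    have h2f : Integrable (fun y => 2 * fstar y - gstar y) volume :=
      (hf_int.const_mul 2).sub hg_int
    have h2f_val : (∫ y, (2 * fstar y - gstar y)) = 1 := by
      rw [integral_sub ((hf_int.const_mul 2 :
        Integrable (fun y => 2 * fstar y) volume)) hg_int, integral_const_mul, hf_one, hg_one]
      ring
    rw [integral_congr_ae (Filter.Eventually.of_forall hpt), integral_sub hI_ff h2f, h2f_val]
  rw [lhs_eq, e1, e2, e3, e4, v2, v3, v4]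
  ring
end
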